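/- Triple convolution bound: for all α, β, γ ≥ 0 there is a constant C such that for all m, n ∈ Λ with |n| ≥ |m|, Σ_{ℓ ∈ Λ} (1+|ℓ|)^{−d} log^α(e+|ℓ|) · (1+|ℓ−m|)^{−d} log^β(e+|ℓ−m|) · (1+|ℓ−n|)^{−d} log^γ(e+|ℓ−n|) ≤ C [ (1+|n|)^{−d} log^α(e+|n|) · (1+|m−n|)^{−d} log^{β+γ+1}(e+|m−n|) + (1+|n|)^{−d} log^γ(e+|n|) · (1+|m|)^{−d} log^{α+β+1}(e+|m|) ]. -/

import Mathlib

open scoped BigOperators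
open Matrix

noncomputable def eunorm (d : ℕ) (x : Fin d → ℝ) : ℝ :=
  ‖(WithLp.equiv 2 (Fin d → ℝ)).symm x‖

noncomputable def wt (α q r : ℝ) : ℝ :=
  (1 + r) ^ (-q) * Real.log (Real.exp 1 + r) ^ α

namespace TCB

noncomputable def lg (r : ℝ) : ℝ := Real.log (Real.exp 1 + r)

lemma one_le_lg {r : ℝ} (hr : 0 ≤ r) : 1 ≤ lg r := by
  have : (1:ℝ) = Real.log (Real.exp 1) := (Real.log_exp 1).symm
  rw [this, lg]
  exact Real.log_le_log (Real.exp_pos 1) (by linarith)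

lemma lg_pos {r : ℝ} (hr : 0 ≤ r) : 0 < lg r := lt_of_lt_of_le one_pos (one_le_lg hr)

lemma lg_nonneg {r : ℝ} (hr : 0 ≤ r) : 0 ≤ lg r := (lg_pos hr).le

lemma lg_mono {r r' : ℝ} (hr : 0 ≤ r) (h : r ≤ r') : lg r ≤ lg r' :=
  Real.log_le_log (by positivity) (by linarith)

lemma lg_scale {c R : ℝ} (hc : 1 ≤ c) (hR : 0 ≤ R) :
    lg (c * R) ≤ (1 + Real.log c) * lg R := by
  have h1 : lg (c * R) ≤ Real.log (c * (Real.exp 1 + R)) := by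
    apply Real.log_le_log (by positivity)
    have := Real.exp_pos 1
    nlinarith
  rw [Real.log_mul (by linarith) (by positivity)] at h1
  have h1' : lg (c * R) ≤ Real.log c + lg R := h1
  have h2 : 1 ≤ lg R := one_le_lg hR
  have h3 : 0 ≤ Real.log c := Real.log_nonneg hc
  nlinarith [mul_le_mul_of_nonneg_left h2 h3]

lemma e_le_four : Real.exp 1 ≤ 4 := by
  have := Real.exp_one_lt_d9
  linarith

lemma two_le_e : (2:ℝ) ≤ Real.exp 1 := by
  have := Real.add_one_le_exp 1
  linarith

lemma log_four_le_two : Real.log 4 ≤ 2 := by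
  have h : (4:ℝ) ≤ Real.exp 2 := by
    have h1 : Real.exp 2 = Real.exp 1 * Real.exp 1 := by
      rw [← Real.exp_add]; norm_num
    nlinarith [two_le_e]
  calc Real.log 4 ≤ Real.log (Real.exp 2) := Real.log_le_log (by norm_num) h
    _ = 2 := Real.log_exp 2

lemma lg_quarter {R R' : ℝ} (hR : 0 ≤ R) (hR' : 0 ≤ R') (h : R ≤ 4 * R') :
    lg R ≤ 3 * lg R' := by
  have h1 : lg R ≤ lg (4 * R') := lg_mono hR h
  have h2 : lg (4 * R') ≤ (1 + Real.log 4) * lg R' := lg_scale (by norm_num) hR'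
  have h3 : 1 ≤ lg R' := one_le_lg hR'
  nlinarith [log_four_le_two]

lemma wt_eq (s q r : ℝ) : wt s q r = (1 + r) ^ (-q) * lg r ^ s := rfl

lemma wt_pos {s q r : ℝ} (hr : 0 ≤ r) : 0 < wt s q r := by
  rw [wt_eq]
  have h1 : (0:ℝ) < 1 + r := by linarith
  have h2 := lg_pos hr
  positivity

lemma wt_nonneg {s q r : ℝ} (hr : 0 ≤ r) : 0 ≤ wt s q r := (wt_pos hr).le

lemma wt_mul {s t q q' r : ℝ} (hr : 0 ≤ r) :
    wt s q r * wt t q' r = wt (s + t) (q + q') r := by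
  have h1 : (0:ℝ) < 1 + r := by linarith
  have h2 := lg_pos hr
  rw [wt_eq, wt_eq, wt_eq, neg_add, Real.rpow_add h1, Real.rpow_add h2]
  ring

lemma wt_mono_s {s t q r : ℝ} (hr : 0 ≤ r) (hst : s ≤ t) : wt s q r ≤ wt t q r := by
  rw [wt_eq, wt_eq]
  have h1 : (0:ℝ) < 1 + r := by linarith
  have : lg r ^ s ≤ lg r ^ t := Real.rpow_le_rpow_of_exponent_le (one_le_lg hr) hst
  have : (0:ℝ) ≤ (1+r) ^ (-q) := by positivity
  nlinarith [Real.rpow_le_rpow_of_exponent_le (one_le_lg hr) hst]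

lemma wt_lg_mul {s u q r : ℝ} (hr : 0 ≤ r) :
    wt s q r * lg r ^ u = wt (s + u) q r := by
  rw [wt_eq, wt_eq, Real.rpow_add (lg_pos hr)]
  ring

lemma one_add_pow_le_exp {N : ℕ} (hN : 1 ≤ N) {u : ℝ} (hu : 0 ≤ u) :
    (1 + u) ^ (N:ℝ) ≤ (N:ℝ) ^ N * Real.exp u := by
  have hN' : (1:ℝ) ≤ (N:ℝ) := by exact_mod_cast hN
  have h0 : (1 + u) ≤ (N:ℝ) * Real.exp (u / N) := by
    have h1 : u / N + 1 ≤ Real.exp (u / N) := Real.add_one_le_exp _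
    have h2 : (N:ℝ) * (u / N + 1) ≤ (N:ℝ) * Real.exp (u / N) :=
      mul_le_mul_of_nonneg_left h1 (by linarith)
    have h3 : (N:ℝ) * (u / N + 1) = u + N := by
      field_simp
    nlinarith
  have h4 : (1 + u) ^ N ≤ ((N:ℝ) * Real.exp (u / N)) ^ N :=
    pow_le_pow_left₀ (by linarith) h0 N
  have h5 : ((N:ℝ) * Real.exp (u / N)) ^ N = (N:ℝ) ^ N * Real.exp u := by
    have hN0 : (N:ℝ) ≠ 0 := by linarith
    have hNu : (N:ℝ) * (u/N) = u := by
      rw [mul_comm]; exact div_mul_cancel₀ u hN0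
    rw [mul_pow, ← Real.exp_nat_mul, hNu]
  rw [Real.rpow_natCast]
  rw [h5] at h4
  exact h4

lemma wt_anti {q : ℝ} (hq : 1 ≤ q) {s : ℝ} (hs : 0 ≤ s) :
    ∃ C : ℝ, 0 < C ∧ ∀ R r : ℝ, 0 ≤ R → R ≤ r → wt s q r ≤ C * wt s q R := by
  set N : ℕ := max (Nat.ceil s) 1 with hNdef
  have hN1 : 1 ≤ N := le_max_right _ _
  have hsN : s ≤ (N:ℝ) := by
    calc s ≤ (Nat.ceil s : ℝ) := Nat.le_ceil s
      _ ≤ (N:ℝ) := by exact_mod_cast le_max_left _ _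
  refine ⟨(N:ℝ)^N, by positivity, fun R r hR hRr => ?_⟩
  have hr : 0 ≤ r := le_trans hR hRr
  have hR1 : (0:ℝ) < 1 + R := by linarith
  have hr1 : (0:ℝ) < 1 + r := by linarith
  set t : ℝ := (1 + r) / (1 + R) with htdef
  have ht1 : 1 ≤ t := (one_le_div hR1).2 (by linarith)
  have ht0 : 0 < t := by linarith
  have htR : t * (1 + R) = 1 + r := div_mul_cancel₀ _ (ne_of_gt hR1)
  -- (1+r)^(-q) = t^(-q) * (1+R)^(-q)
  have hsplit : (1 + r) ^ (-q) = t ^ (-q) * (1 + R) ^ (-q) := by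
    rw [← htR, Real.mul_rpow ht0.le hR1.le]
  -- lg r ≤ (1 + log t) * lg R
  have hlg : lg r ≤ (1 + Real.log t) * lg R := by
    have he : (1:ℝ) ≤ Real.exp 1 := by linarith [two_le_e]
    have key : Real.exp 1 + r ≤ t * (Real.exp 1 + R) := by
      rw [htdef]
      rw [div_mul_eq_mul_div, le_div_iff₀ hR1]
      nlinarith
    have h1 : lg r ≤ Real.log (t * (Real.exp 1 + R)) :=
      Real.log_le_log (by positivity) key
    rw [Real.log_mul (by linarith) (by positivity)] at h1
    have h1' : lg r ≤ Real.log t + lg R := h1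
    have h2 : 1 ≤ lg R := one_le_lg hR
    have h3 : 0 ≤ Real.log t := Real.log_nonneg ht1
    nlinarith [mul_le_mul_of_nonneg_left h2 h3]
  have hlgpow : lg r ^ s ≤ (1 + Real.log t) ^ s * lg R ^ s := by
    rw [← Real.mul_rpow (by nlinarith [Real.log_nonneg ht1]) (lg_nonneg hR)]
    exact Real.rpow_le_rpow (lg_nonneg hr) hlg hs
  have hfac : (1 + Real.log t) ^ s ≤ (N:ℝ)^N * t := by
    have h3 : 0 ≤ Real.log t := Real.log_nonneg ht1
    calc (1 + Real.log t) ^ s ≤ (1 + Real.log t) ^ (N:ℝ) :=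
          Real.rpow_le_rpow_of_exponent_le (by linarith) hsN
      _ ≤ (N:ℝ)^N * Real.exp (Real.log t) := one_add_pow_le_exp hN1 h3
      _ = (N:ℝ)^N * t := by rw [Real.exp_log ht0]
  have htq : t ^ (-q) ≤ t⁻¹ := by
    have : t ^ (-q) ≤ t ^ (-1:ℝ) :=
      Real.rpow_le_rpow_of_exponent_le ht1 (by linarith)
    rwa [Real.rpow_neg_one] at this
  -- combine
  rw [wt_eq, wt_eq, hsplit]
  have hRq : (0:ℝ) ≤ (1+R)^(-q) := by positivity
  have hlgRs : (0:ℝ) ≤ lg R ^ s := Real.rpow_nonneg (lg_nonneg hR) s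
  have hlgrs : (0:ℝ) ≤ lg r ^ s := Real.rpow_nonneg (lg_nonneg hr) s
  have htqpos : (0:ℝ) ≤ t ^ (-q) := by positivity
  calc t ^ (-q) * (1+R)^(-q) * lg r ^ s
      ≤ t⁻¹ * (1+R)^(-q) * ((1 + Real.log t) ^ s * lg R ^ s) := by
        apply mul_le_mul (by apply mul_le_mul_of_nonneg_right htq hRq) hlgpow hlgrs
        positivity
    _ ≤ t⁻¹ * (1+R)^(-q) * (((N:ℝ)^N * t) * lg R ^ s) := by
        apply mul_le_mul_of_nonneg_left _ (by positivity)
        exact mul_le_mul_of_nonneg_right hfac hlgRs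
    _ = ((N:ℝ)^N) * ((1+R)^(-q) * lg R ^ s) * (t⁻¹ * t) := by ring
    _ = (N:ℝ)^N * ((1+R)^(-q) * lg R ^ s) := by
        rw [inv_mul_cancel₀ (ne_of_gt ht0), mul_one]

lemma wt_scale {c : ℝ} (hc : 1 ≤ c) {s q R : ℝ} (hR : 0 ≤ R) (hq : 0 ≤ q) (hs : 0 ≤ s) :
    wt s q (R / c) ≤ c ^ q * wt s q R := by
  have hc0 : (0:ℝ) < c := by linarith
  have hRc : (0:ℝ) ≤ R / c := by positivity
  have h1 : (1 + R) / c ≤ 1 + R / c := by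
    rw [div_le_iff₀ hc0]
    have hRR : R / c * c = R := div_mul_cancel₀ R (ne_of_gt hc0)
    nlinarith
  have h2 : ((1 + R)/c) ^ (-q) = c ^ q * (1 + R) ^ (-q) := by
    rw [Real.div_rpow (by linarith) hc0.le, Real.rpow_neg hc0.le q, div_eq_mul_inv, inv_inv]
    ring
  have h3 : (1 + R / c) ^ (-q) ≤ ((1 + R)/c) ^ (-q) := by
    rw [Real.rpow_neg (by positivity), Real.rpow_neg (by positivity)]
    apply inv_anti₀
    · positivity
    · exact Real.rpow_le_rpow (by positivity) h1 hq
  have h4 : lg (R / c) ^ s ≤ lg R ^ s :=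
    Real.rpow_le_rpow (lg_nonneg hRc) (lg_mono hRc (div_le_self hR hc)) hs
  rw [wt_eq, wt_eq]
  calc (1 + R/c) ^ (-q) * lg (R/c) ^ s
      ≤ ((1+R)/c) ^ (-q) * lg R ^ s := by
        apply mul_le_mul h3 h4 (Real.rpow_nonneg (lg_nonneg hRc) s) (by positivity)
    _ = c ^ q * ((1+R) ^ (-q) * lg R ^ s) := by rw [h2]; ring

/-! ### Counting in `ℤ^d` -/

def nu (d : ℕ) (z : Fin d → ℤ) : ℕ := Finset.univ.sup fun j => (z j).natAbs

lemma natAbs_le_nu (d : ℕ) (z : Fin d → ℤ) (j : Fin d) : (z j).natAbs ≤ nu d z :=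
  Finset.le_sup (f := fun j => (z j).natAbs) (Finset.mem_univ j)

noncomputable def box (d K : ℕ) : Finset (Fin d → ℤ) := Fintype.piFinset fun _ => Finset.Icc (-(K:ℤ)) K

lemma mem_box_of_nu_le {d K : ℕ} {z : Fin d → ℤ} (h : nu d z ≤ K) : z ∈ box d K := by
  rw [box, Fintype.mem_piFinset]
  intro j
  rw [Finset.mem_Icc]
  have h1 : (z j).natAbs ≤ K := le_trans (natAbs_le_nu d z j) h
  have h2 : |z j| ≤ (K:ℤ) := by
    rw [Int.abs_eq_natAbs]; exact_mod_cast h1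
  exact abs_le.1 h2

lemma card_box (d K : ℕ) : (box d K).card = (2*K+1)^d := by
  rw [box, Fintype.card_piFinset]
  have h : (Finset.Icc (-(K:ℤ)) (K:ℤ)).card = 2*K+1 := by
    rw [Int.card_Icc]
    have : (K:ℤ) + 1 - -(K:ℤ) = ((2*K+1 : ℕ) : ℤ) := by push_cast; ring
    rw [this, Int.toNat_natCast]
  rw [Finset.prod_congr rfl (fun i _ => h), Finset.prod_const, Finset.card_univ,
    Fintype.card_fin]

/-- base-2 real power -/
noncomputable def pw (x : ℝ) : ℝ := (2:ℝ) ^ x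

lemma pw_pos (x : ℝ) : 0 < pw x := Real.rpow_pos_of_pos two_pos x

lemma pw_add (x y : ℝ) : pw (x + y) = pw x * pw y := Real.rpow_add two_pos x y

lemma pw_nat (n : ℕ) : pw (n:ℝ) = 2^n := Real.rpow_natCast 2 n

lemma pw_mono {x y : ℝ} (h : x ≤ y) : pw x ≤ pw y :=
  Real.rpow_le_rpow_of_exponent_le one_le_two h

lemma pw_two_d (d : ℕ) : pw (2*(d:ℝ)) = 4^d := by
  have h1 : pw (2*(d:ℝ)) = (2:ℝ)^(2*d : ℕ) := by
    rw [pw, ← Real.rpow_natCast 2 (2*d)]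
    congr 1
    push_cast
    ring
  rw [h1, pow_mul]
  norm_num

/-- dyadic shell weight bound -/
lemma wt_shell {d : ℕ} {s q : ℝ} (hs : 0 ≤ s) (hq : 0 ≤ q) (z : Fin d → ℤ) {j : ℕ}
    (hj : Nat.log 2 (nu d z) = j) :
    wt s q ((nu d z : ℝ)) ≤ 2^s * ((j:ℝ)+1)^s * pw (-((j:ℝ)*q)) := by
  have h2s : (1:ℝ) ≤ 2^s := by
    have := Real.rpow_le_rpow_of_exponent_le (by norm_num : (1:ℝ) ≤ 2) hs
    rwa [Real.rpow_zero] at this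
  have hlgz : lg 0 = 1 := by rw [lg, add_zero, Real.log_exp]
  have hwtz : wt s q 0 = 1 := by
    rw [wt_eq, hlgz, add_zero, Real.one_rpow, Real.one_rpow, one_mul]
  by_cases hz : nu d z = 0
  · have hj0 : j = 0 := by rw [hz] at hj; simpa using hj.symm
    subst hj0
    rw [hz, Nat.cast_zero, hwtz]
    simp only [zero_mul, neg_zero, zero_add, pw, Real.rpow_zero, Real.one_rpow]
    linarith
  · set n := nu d z with hn
    have h2j : 2^j ≤ n := by rw [← hj]; exact Nat.pow_log_le_self 2 hz
    have hlt : n < 2^(j+1) := by rw [← hj]; exact Nat.lt_pow_succ_log_self (by norm_num) n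
    have h2jr : (2:ℝ)^j ≤ 1 + (n:ℝ) := by
      have : ((2^j : ℕ):ℝ) ≤ (n:ℝ) := by exact_mod_cast h2j
      push_cast at this ⊢
      linarith
    have hb1 : ((1:ℝ) + n) ^ (-q) ≤ pw (-((j:ℝ)*q)) := by
      have hp1 : (0:ℝ) < (2:ℝ)^j := by positivity
      have hp2 : (0:ℝ) < 1 + (n:ℝ) := by positivity
      have key : ((2:ℝ)^j) ^ q ≤ (1 + (n:ℝ)) ^ q := Real.rpow_le_rpow hp1.le h2jr hq
      have e1 : ((1:ℝ) + n) ^ (-q) = ((1 + (n:ℝ)) ^ q)⁻¹ := Real.rpow_neg hp2.le q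
      have e2 : pw (-((j:ℝ)*q)) = (((2:ℝ)^j) ^ q)⁻¹ := by
        rw [pw, ← Real.rpow_natCast 2 j, ← Real.rpow_mul (by norm_num : (0:ℝ) ≤ 2),
          Real.rpow_neg (by positivity)]
      rw [e1, e2]
      exact inv_anti₀ (by positivity) key
    have hb2 : lg (n:ℝ) ^ s ≤ 2^s * ((j:ℝ)+1)^s := by
      have hlg : lg (n:ℝ) ≤ 2 * ((j:ℝ)+1) := by
        have hn1 : (1:ℝ) + (n:ℝ) ≤ 2^(j+1) := by
          have : (n:ℕ) + 1 ≤ 2^(j+1) := hlt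
          have := (Nat.cast_le (α := ℝ)).2 this
          push_cast at this
          linarith
        have he1 : (1:ℝ) ≤ Real.exp 1 := by linarith [two_le_e]
        have step1 : Real.exp 1 + (n:ℝ) ≤ Real.exp 1 * 2^(j+1) := by
          have : Real.exp 1 + (n:ℝ) ≤ Real.exp 1 * (1 + (n:ℝ)) := by nlinarith [Nat.cast_nonneg (α := ℝ) n]
          have h2 : Real.exp 1 * (1 + (n:ℝ)) ≤ Real.exp 1 * 2^(j+1) :=
            mul_le_mul_of_nonneg_left hn1 (by positivity)
          linarith
        have step2 : lg (n:ℝ) ≤ Real.log (Real.exp 1 * 2^(j+1)) :=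
          Real.log_le_log (by positivity) step1
        rw [Real.log_mul (by positivity) (by positivity), Real.log_exp, Real.log_pow] at step2
        have hlog2 : Real.log 2 ≤ 1 := by
          rw [← Real.log_exp 1]
          exact Real.log_le_log (by norm_num) two_le_e
        have hj1 : ((j:ℝ)+1) * Real.log 2 ≤ ((j:ℝ)+1) := by
          have hj0 : (0:ℝ) ≤ (j:ℝ)+1 := by positivity
          nlinarith
        push_cast at step2
        have hjn : (0:ℝ) ≤ (j:ℝ) := Nat.cast_nonneg j
        linarith
      calc lg (n:ℝ) ^ s ≤ (2 * ((j:ℝ)+1)) ^ s :=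
            Real.rpow_le_rpow (lg_nonneg (by positivity)) hlg hs
        _ = 2^s * ((j:ℝ)+1)^s := Real.mul_rpow (by norm_num) (by positivity)
    rw [wt_eq]
    have := mul_le_mul hb1 hb2 (Real.rpow_nonneg (lg_nonneg (by positivity)) s) (pw_pos _).le
    calc (1 + (n:ℝ)) ^ (-q) * lg (n:ℝ) ^ s ≤ pw (-((j:ℝ)*q)) * (2^s * ((j:ℝ)+1)^s) := this
      _ = 2^s * ((j:ℝ)+1)^s * pw (-((j:ℝ)*q)) := by ring

lemma half_le_log_two : (1/2:ℝ) ≤ Real.log 2 := by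
  rw [Real.le_log_iff_exp_le (by norm_num : (0:ℝ) < 2)]
  have h : Real.exp (1/2) * Real.exp (1/2) = Real.exp 1 := by
    rw [← Real.exp_add]; norm_num
  nlinarith [Real.exp_pos (1/2), e_le_four]

lemma natlog_le_lg {M : ℝ} (hM : 0 ≤ M) :
    ((Nat.log 2 (Nat.floor M) : ℝ) + 1) ≤ 3 * lg M := by
  have h1 : 1 ≤ lg M := one_le_lg hM
  by_cases h0 : Nat.floor M = 0
  · rw [h0]
    simp only [Nat.log_zero_right, Nat.cast_zero, zero_add]
    linarith
  · set L := Nat.log 2 (Nat.floor M) with hL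
    have h2L : (2:ℝ)^L ≤ M := by
      have hn : 2^L ≤ Nat.floor M := Nat.pow_log_le_self 2 h0
      have : ((2^L : ℕ):ℝ) ≤ ((Nat.floor M : ℕ):ℝ) := by exact_mod_cast hn
      push_cast at this
      linarith [Nat.floor_le hM]
    have hM1 : (1:ℝ) ≤ M := le_trans (one_le_pow₀ one_le_two) h2L
    have hlog : (L:ℝ) * Real.log 2 ≤ Real.log M := by
      rw [← Real.log_pow]
      exact Real.log_le_log (show (0:ℝ) < (2:ℝ)^L by positivity) h2L
    have hlgM : Real.log M ≤ lg M := by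
      rw [lg]
      apply Real.log_le_log (by linarith)
      linarith [Real.exp_pos 1]
    have : (L:ℝ) * (1/2) ≤ Real.log M := by
      nlinarith [half_le_log_two, Nat.cast_nonneg (α := ℝ) L]
    linarith

lemma summable_poly_geom {s : ℝ} (hs : 0 ≤ s) {d : ℕ} (hd : 1 ≤ d) :
    Summable (fun j : ℕ => ((j:ℝ)+1)^s * pw (-((j:ℝ)*(d:ℝ)))) := by
  set r : ℝ := pw (-(d:ℝ)) with hr
  have hr0 : 0 < r := pw_pos _
  have hr1 : r < 1 := by
    rw [hr, pw]
    apply Real.rpow_lt_one_of_one_lt_of_neg (by norm_num)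
    have : (1:ℝ) ≤ (d:ℝ) := by exact_mod_cast hd
    linarith
  have hpw : ∀ j : ℕ, pw (-((j:ℝ)*(d:ℝ))) = r^j := by
    intro j
    rw [hr, pw, pw, ← Real.rpow_natCast ((2:ℝ)^(-(d:ℝ))) j, ← Real.rpow_mul (by norm_num)]
    congr 1
    ring
  set n := Nat.ceil s with hn
  have h1 : Summable (fun j : ℕ => ((j:ℝ))^n * r^j) :=
    summable_pow_mul_geometric_of_norm_lt_one n (by rwa [Real.norm_eq_abs, abs_of_pos hr0])
  have h2 : Summable (fun j : ℕ => ((j:ℝ)+1)^n * r^(j+1)) := by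
    have := (summable_nat_add_iff 1).2 h1
    apply this.congr
    intro j
    push_cast
    ring
  have h3 : Summable (fun j : ℕ => ((j:ℝ)+1)^n * r^j) := by
    have h4 := h2.mul_left r⁻¹
    apply h4.congr
    intro j
    rw [pow_succ]
    field_simp
  apply h3.of_nonneg_of_le
  · intro j
    exact mul_nonneg (Real.rpow_nonneg (by positivity) s) (pw_pos _).le
  · intro j
    rw [hpw j]
    apply mul_le_mul_of_nonneg_right _ (by positivity)
    calc ((j:ℝ)+1)^s ≤ ((j:ℝ)+1)^(n:ℝ) :=
          Real.rpow_le_rpow_of_exponent_le (by linarith [Nat.cast_nonneg (α := ℝ) j]) (by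
            rw [hn]; exact_mod_cast Nat.le_ceil s)
      _ = ((j:ℝ)+1)^n := Real.rpow_natCast _ n

lemma fiber_card_le {d : ℕ} (S : Finset (Fin d → ℤ)) (j : ℕ) :
    (((S.filter fun z => Nat.log 2 (nu d z) = j).card : ℝ)) ≤ pw (((j:ℝ)+2)*(d:ℝ)) := by
  have hsub : (S.filter fun z => Nat.log 2 (nu d z) = j) ⊆ box d (2^(j+1) - 1) := by
    intro z hz
    rw [Finset.mem_filter] at hz
    apply mem_box_of_nu_le
    have h1 : nu d z < 2^(j+1) := by
      rw [← hz.2]; exact Nat.lt_pow_succ_log_self (by norm_num) _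
    omega
  have h2 : (S.filter fun z => Nat.log 2 (nu d z) = j).card ≤ (2*(2^(j+1)-1)+1)^d := by
    rw [← card_box d (2^(j+1)-1)]
    exact Finset.card_le_card hsub
  have h3 : (2*(2^(j+1)-1)+1)^d ≤ (2^(j+2))^d := by
    apply Nat.pow_le_pow_left
    have : 1 ≤ 2^(j+1) := Nat.one_le_two_pow
    calc 2*(2^(j+1)-1)+1 ≤ 2*2^(j+1) := by omega
      _ = 2^(j+2) := by ring
  have h4 : (((2^(j+2))^d : ℕ) : ℝ) = pw (((j:ℝ)+2)*(d:ℝ)) := by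
    rw [← pow_mul]
    push_cast
    rw [pw, ← Real.rpow_natCast 2 ((j+2)*d)]
    congr 1
    push_cast
    ring
  calc (((S.filter fun z => Nat.log 2 (nu d z) = j).card : ℝ))
      ≤ (((2*(2^(j+1)-1)+1)^d : ℕ) : ℝ) := by exact_mod_cast h2
    _ ≤ (((2^(j+2))^d : ℕ) : ℝ) := by exact_mod_cast h3
    _ = pw (((j:ℝ)+2)*(d:ℝ)) := h4

lemma core_a (d : ℕ) (hd : 1 ≤ d) {s : ℝ} (hs : 0 ≤ s) :
    ∃ C : ℝ, 0 < C ∧ ∀ M : ℝ, 0 ≤ M → ∀ S : Finset (Fin d → ℤ),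
      (∀ z ∈ S, ((nu d z : ℝ) ≤ M)) →
      ∑ z ∈ S, wt s d ((nu d z : ℝ)) ≤ C * lg M ^ (s+1) := by
  refine ⟨4^d * 2^s * 3^(s+1), by positivity, fun M hM S hS => ?_⟩
  set L := Nat.log 2 (Nat.floor M) with hLdef
  have hmaps : ∀ z ∈ S, Nat.log 2 (nu d z) ∈ Finset.range (L+1) := by
    intro z hz
    rw [Finset.mem_range, Nat.lt_succ_iff]
    exact Nat.log_mono_right (Nat.le_floor (hS z hz))
  rw [← Finset.sum_fiberwise_of_maps_to hmaps]
  have hinner : ∀ j ∈ Finset.range (L+1),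
      (∑ z ∈ S.filter fun z => Nat.log 2 (nu d z) = j, wt s d ((nu d z : ℝ)))
        ≤ 4^d * 2^s * ((j:ℝ)+1)^s := by
    intro j _
    have hB : ∀ z ∈ S.filter fun z => Nat.log 2 (nu d z) = j,
        wt s d ((nu d z : ℝ)) ≤ 2^s * ((j:ℝ)+1)^s * pw (-((j:ℝ)*(d:ℝ))) := by
      intro z hz
      rw [Finset.mem_filter] at hz
      exact wt_shell hs (by positivity) z hz.2
    calc (∑ z ∈ S.filter fun z => Nat.log 2 (nu d z) = j, wt s d ((nu d z : ℝ)))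
        ≤ (S.filter fun z => Nat.log 2 (nu d z) = j).card •
            (2^s * ((j:ℝ)+1)^s * pw (-((j:ℝ)*(d:ℝ)))) := Finset.sum_le_card_nsmul _ _ _ hB
      _ = ((S.filter fun z => Nat.log 2 (nu d z) = j).card : ℝ) *
            (2^s * ((j:ℝ)+1)^s * pw (-((j:ℝ)*(d:ℝ)))) := by rw [nsmul_eq_mul]
      _ ≤ pw (((j:ℝ)+2)*(d:ℝ)) * (2^s * ((j:ℝ)+1)^s * pw (-((j:ℝ)*(d:ℝ)))) := by
          apply mul_le_mul_of_nonneg_right (fiber_card_le S j)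
          have := pw_pos (-((j:ℝ)*(d:ℝ)))
          have h2s : (0:ℝ) ≤ 2^s := (Real.rpow_nonneg (by norm_num) s)
          have hj1 : (0:ℝ) ≤ ((j:ℝ)+1)^s := Real.rpow_nonneg (by positivity) s
          positivity
      _ = 4^d * 2^s * ((j:ℝ)+1)^s := by
          have : pw (((j:ℝ)+2)*(d:ℝ)) * pw (-((j:ℝ)*(d:ℝ))) = pw (2*(d:ℝ)) := by
            rw [← pw_add]; congr 1; ring
          have h4d : pw (2*(d:ℝ)) = 4^d := pw_two_d d
          calc pw (((j:ℝ)+2)*(d:ℝ)) * (2^s * ((j:ℝ)+1)^s * pw (-((j:ℝ)*(d:ℝ))))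
              = (pw (((j:ℝ)+2)*(d:ℝ)) * pw (-((j:ℝ)*(d:ℝ)))) * (2^s * ((j:ℝ)+1)^s) := by ring
            _ = pw (2*(d:ℝ)) * (2^s * ((j:ℝ)+1)^s) := by rw [this]
            _ = 4^d * 2^s * ((j:ℝ)+1)^s := by rw [h4d]; ring
  have hstep : (∑ j ∈ Finset.range (L+1), ∑ z ∈ S.filter fun z => Nat.log 2 (nu d z) = j,
      wt s d ((nu d z : ℝ))) ≤ ∑ j ∈ Finset.range (L+1), 4^d * 2^s * ((j:ℝ)+1)^s :=
    Finset.sum_le_sum hinner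
  have hstep2 : (∑ j ∈ Finset.range (L+1), 4^d * 2^s * ((j:ℝ)+1)^s)
      ≤ (L+1) * (4^d * 2^s * ((L:ℝ)+1)^s) := by
    have : ∀ j ∈ Finset.range (L+1), 4^d * 2^s * ((j:ℝ)+1)^s ≤ 4^d * 2^s * ((L:ℝ)+1)^s := by
      intro j hj
      rw [Finset.mem_range, Nat.lt_succ_iff] at hj
      apply mul_le_mul_of_nonneg_left _ (by positivity)
      apply Real.rpow_le_rpow (by positivity) _ hs
      have : (j:ℝ) ≤ (L:ℝ) := by exact_mod_cast hj
      linarith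
    calc (∑ j ∈ Finset.range (L+1), 4^d * 2^s * ((j:ℝ)+1)^s)
        ≤ ∑ _j ∈ Finset.range (L+1), 4^d * 2^s * ((L:ℝ)+1)^s := Finset.sum_le_sum this
      _ = (L+1) * (4^d * 2^s * ((L:ℝ)+1)^s) := by
          rw [Finset.sum_const, Finset.card_range, nsmul_eq_mul]
          push_cast
          ring
  have hL3 : ((L:ℝ)+1) ≤ 3 * lg M := natlog_le_lg hM
  have hfin : ((L:ℝ)+1) * (4^d * 2^s * ((L:ℝ)+1)^s) ≤ 4^d * 2^s * 3^(s+1) * lg M ^ (s+1) := by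
    have e1 : ((L:ℝ)+1) * (4^d * 2^s * ((L:ℝ)+1)^s) = 4^d * 2^s * ((L:ℝ)+1)^(s+1) := by
      have : ((L:ℝ)+1)^(s+1) = ((L:ℝ)+1)^s * ((L:ℝ)+1) := by
        rw [Real.rpow_add (by positivity), Real.rpow_one]
      rw [this]; ring
    rw [e1]
    have h2 : ((L:ℝ)+1)^(s+1) ≤ (3 * lg M)^(s+1) :=
      Real.rpow_le_rpow (by positivity) hL3 (by linarith)
    have h3 : ((3:ℝ) * lg M)^(s+1) = 3^(s+1) * lg M ^(s+1) :=
      Real.mul_rpow (by norm_num) (lg_nonneg hM)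
    calc 4^d * 2^s * ((L:ℝ)+1)^(s+1) ≤ 4^d * 2^s * (3 * lg M)^(s+1) := by
          apply mul_le_mul_of_nonneg_left h2
          have h2s : (0:ℝ) ≤ 2^s := Real.rpow_nonneg (by norm_num) s
          positivity
      _ = 4^d * 2^s * 3^(s+1) * lg M ^ (s+1) := by rw [h3]; ring
  have hcast : ((L+1 : ℕ):ℝ) = (L:ℝ)+1 := by push_cast; ring
  linarith [hstep, hstep2, hfin]

lemma core_b (d : ℕ) (hd : 1 ≤ d) {s : ℝ} (hs : 0 ≤ s) :
    ∃ C : ℝ, 0 < C ∧ ∀ R : ℝ, 0 ≤ R → ∀ S : Finset (Fin d → ℤ),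
      (∀ z ∈ S, R ≤ (nu d z : ℝ)) →
      ∑ z ∈ S, wt s (2*(d:ℝ)) ((nu d z : ℝ)) ≤ C * wt s d R := by
  set f : ℕ → ℝ := fun j => ((j:ℝ)+1)^s * pw (-((j:ℝ)*(d:ℝ))) with hf
  have hfpos : ∀ j, 0 ≤ f j := fun j =>
    mul_nonneg (Real.rpow_nonneg (by positivity) s) (pw_pos _).le
  have hfs : Summable f := summable_poly_geom hs hd
  set Ks : ℝ := (∑' j, f j) + 1 with hKs
  have hKs0 : 0 < Ks := by
    have : 0 ≤ ∑' j, f j := tsum_nonneg hfpos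
    linarith
  refine ⟨4^d * 2^s * (3^s * 4^d * Ks), by positivity, fun R hR S hS => ?_⟩
  set J := Nat.log 2 (Nat.floor R) with hJdef
  -- all fibers have index ≥ J
  have hmaps : ∀ z ∈ S, Nat.log 2 (nu d z) ∈ (S.image fun z => Nat.log 2 (nu d z)) :=
    fun z hz => Finset.mem_image_of_mem _ hz
  rw [← Finset.sum_fiberwise_of_maps_to hmaps]
  set T := S.image fun z => Nat.log 2 (nu d z) with hT
  have hJle : ∀ j ∈ T, J ≤ j := by
    intro j hj
    rw [hT, Finset.mem_image] at hj
    obtain ⟨z, hzS, hzj⟩ := hj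
    have h1 : R ≤ (nu d z : ℝ) := hS z hzS
    have h2 : nu d z < 2^(j+1) := by
      rw [← hzj]; exact Nat.lt_pow_succ_log_self (by norm_num) _
    have h3 : Nat.floor R ≤ nu d z := by
      have := Nat.floor_mono h1
      rwa [Nat.floor_natCast] at this
    have h4 : Nat.floor R < 2^(j+1) := lt_of_le_of_lt h3 h2
    by_cases h0 : Nat.floor R = 0
    · rw [hJdef, h0]
      simp [Nat.log_zero_right]
    · have h5 : Nat.log 2 (Nat.floor R) < j + 1 := Nat.log_lt_of_lt_pow h0 h4
      rw [hJdef]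
      omega
  -- per-fiber bound
  have hinner : ∀ j ∈ T,
      (∑ z ∈ S.filter fun z => Nat.log 2 (nu d z) = j, wt s (2*(d:ℝ)) ((nu d z : ℝ)))
        ≤ 4^d * 2^s * f j := by
    intro j _
    have hB : ∀ z ∈ S.filter fun z => Nat.log 2 (nu d z) = j,
        wt s (2*(d:ℝ)) ((nu d z : ℝ)) ≤ 2^s * ((j:ℝ)+1)^s * pw (-((j:ℝ)*(2*(d:ℝ)))) := by
      intro z hz
      rw [Finset.mem_filter] at hz
      exact wt_shell hs (by positivity) z hz.2
    have hpwalg : pw (((j:ℝ)+2)*(d:ℝ)) * pw (-((j:ℝ)*(2*(d:ℝ)))) = 4^d * pw (-((j:ℝ)*(d:ℝ))) := by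
      rw [← pw_two_d d, ← pw_add, ← pw_add]
      congr 1
      ring
    have h2s : (0:ℝ) ≤ 2^s := Real.rpow_nonneg (by norm_num) s
    have hj1 : (0:ℝ) ≤ ((j:ℝ)+1)^s := Real.rpow_nonneg (by positivity) s
    calc (∑ z ∈ S.filter fun z => Nat.log 2 (nu d z) = j, wt s (2*(d:ℝ)) ((nu d z : ℝ)))
        ≤ (S.filter fun z => Nat.log 2 (nu d z) = j).card •
            (2^s * ((j:ℝ)+1)^s * pw (-((j:ℝ)*(2*(d:ℝ))))) := Finset.sum_le_card_nsmul _ _ _ hB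
      _ = ((S.filter fun z => Nat.log 2 (nu d z) = j).card : ℝ) *
            (2^s * ((j:ℝ)+1)^s * pw (-((j:ℝ)*(2*(d:ℝ))))) := by rw [nsmul_eq_mul]
      _ ≤ pw (((j:ℝ)+2)*(d:ℝ)) * (2^s * ((j:ℝ)+1)^s * pw (-((j:ℝ)*(2*(d:ℝ))))) := by
          apply mul_le_mul_of_nonneg_right (fiber_card_le S j)
          have := (pw_pos (-((j:ℝ)*(2*(d:ℝ))))).le
          positivity
      _ = (pw (((j:ℝ)+2)*(d:ℝ)) * pw (-((j:ℝ)*(2*(d:ℝ))))) * (2^s * ((j:ℝ)+1)^s) := by ring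
      _ = 4^d * pw (-((j:ℝ)*(d:ℝ))) * (2^s * ((j:ℝ)+1)^s) := by rw [hpwalg]
      _ = 4^d * 2^s * f j := by rw [hf]; ring
  -- tail sum bound
  have hFnonneg : ∀ j : ℕ, 0 ≤ (if J ≤ j then f j else 0) := by
    intro j
    split
    · exact hfpos j
    · exact le_refl 0
  have hFle : ∀ j : ℕ, (if J ≤ j then f j else 0) ≤ f j := by
    intro j
    split
    · exact le_refl _
    · exact hfpos j
  have hFsum : Summable (fun j : ℕ => if J ≤ j then f j else 0) :=
    Summable.of_nonneg_of_le hFnonneg hFle hfs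
  have step1 : ∑ j ∈ T, f j ≤ ∑' j : ℕ, (if J ≤ j then f j else 0) := by
    have he : ∀ j ∈ T, f j = (if J ≤ j then f j else 0) := fun j hj => (if_pos (hJle j hj)).symm
    rw [Finset.sum_congr rfl he]
    exact Summable.sum_le_tsum T (fun j _ => hFnonneg j) hFsum
  have step2 : ∑' j : ℕ, (if J ≤ j then f j else 0) = ∑' i : ℕ, f (i + J) := by
    rw [← Summable.sum_add_tsum_nat_add J hFsum]
    have hzero : ∑ i ∈ Finset.range J, (if J ≤ i then f i else 0) = 0 :=
      Finset.sum_eq_zero fun i hi => if_neg (not_le.2 (Finset.mem_range.1 hi))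
    have hshift : ∀ i : ℕ, (if J ≤ i + J then f (i+J) else 0) = f (i+J) :=
      fun i => if_pos (Nat.le_add_left J i)
    rw [hzero, zero_add]
    exact tsum_congr hshift
  have hfsJ : Summable (fun i : ℕ => f (i + J)) := (summable_nat_add_iff J).2 hfs
  have step3 : ∑' i : ℕ, f (i + J) ≤ (((J:ℝ)+1)^s * pw (-((J:ℝ)*(d:ℝ)))) * ∑' i : ℕ, f i := by
    rw [← tsum_mul_left]
    apply Summable.tsum_le_tsum _ hfsJ (hfs.mul_left _)
    intro i
    rw [hf]
    simp only []
    have hbase : ((i:ℝ) + (J:ℝ)) + 1 ≤ ((i:ℝ)+1) * ((J:ℝ)+1) := by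
      have hi0 : (0:ℝ) ≤ (i:ℝ) := Nat.cast_nonneg i
      have hj0 : (0:ℝ) ≤ (J:ℝ) := Nat.cast_nonneg J
      nlinarith
    have h1 : ((↑(i+J):ℝ)+1)^s ≤ ((i:ℝ)+1)^s * ((J:ℝ)+1)^s := by
      have : ((↑(i+J):ℝ)+1)^s ≤ (((i:ℝ)+1) * ((J:ℝ)+1))^s := by
        apply Real.rpow_le_rpow (by positivity) _ hs
        push_cast
        linarith [hbase]
      rwa [Real.mul_rpow (by positivity) (by positivity)] at this
    have h2 : pw (-((↑(i+J):ℝ)*(d:ℝ))) = pw (-((i:ℝ)*(d:ℝ))) * pw (-((J:ℝ)*(d:ℝ))) := by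
      rw [← pw_add]
      congr 1
      push_cast
      ring
    calc ((↑(i+J):ℝ)+1)^s * pw (-((↑(i+J):ℝ)*(d:ℝ)))
        ≤ (((i:ℝ)+1)^s * ((J:ℝ)+1)^s) * pw (-((↑(i+J):ℝ)*(d:ℝ))) := by
          exact mul_le_mul_of_nonneg_right h1 (pw_pos _).le
      _ = (((J:ℝ)+1)^s * pw (-((J:ℝ)*(d:ℝ)))) * (((i:ℝ)+1)^s * pw (-((i:ℝ)*(d:ℝ)))) := by
          rw [h2]; ring
  have htsum_le : ∑' i : ℕ, f i ≤ Ks := by rw [hKs]; linarith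
  have hJ1 : ((J:ℝ)+1)^s ≤ 3^s * lg R ^ s := by
    have h1 : ((J:ℝ)+1) ≤ 3 * lg R := by rw [hJdef]; exact natlog_le_lg hR
    calc ((J:ℝ)+1)^s ≤ (3 * lg R)^s := Real.rpow_le_rpow (by positivity) h1 hs
      _ = 3^s * lg R ^ s := Real.mul_rpow (by norm_num) (lg_nonneg hR)
  have hpwJ : pw (-((J:ℝ)*(d:ℝ))) ≤ 4^d * (1+R)^(-(d:ℝ)) := by
    have hfl : (⌊R⌋₊ : ℝ) < 2^(J+1) := by
      have : ⌊R⌋₊ < 2^(J+1) := by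
        rw [hJdef]; exact Nat.lt_pow_succ_log_self (by norm_num) _
      exact_mod_cast this
    have hRlt : R < (2:ℝ)^(J+1) := lt_of_lt_of_le (Nat.lt_floor_add_one R) (by
      have : (⌊R⌋₊ : ℝ) + 1 ≤ (2:ℝ)^(J+1) := by
        have h2 : ⌊R⌋₊ + 1 ≤ 2^(J+1) := by
          have : ⌊R⌋₊ < 2^(J+1) := by
            rw [hJdef]; exact Nat.lt_pow_succ_log_self (by norm_num) _
          omega
        exact_mod_cast h2
      linarith)
    have h1R : 1 + R ≤ pw ((J:ℝ)+2) := by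
      have e1 : pw ((J:ℝ)+2) = (2:ℝ)^(J+2) := by
        rw [show (J:ℝ)+2 = ((J+2 : ℕ):ℝ) by push_cast; ring, pw_nat]
      have h2 : (1:ℝ) ≤ (2:ℝ)^(J+1) := one_le_pow₀ one_le_two
      have e2 : (2:ℝ)^(J+2) = (2:ℝ)^(J+1) + (2:ℝ)^(J+1) := by ring
      rw [e1, e2]
      linarith
    have hpwpos : 0 < pw ((J:ℝ)+2) := pw_pos _
    have h1Rpos : (0:ℝ) < 1 + R := by linarith
    have hflip : (pw ((J:ℝ)+2)) ^ (-(d:ℝ)) ≤ (1+R) ^ (-(d:ℝ)) := by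
      rw [Real.rpow_neg hpwpos.le, Real.rpow_neg h1Rpos.le]
      apply inv_anti₀ (Real.rpow_pos_of_pos h1Rpos _)
      exact Real.rpow_le_rpow h1Rpos.le h1R (by positivity)
    have hsplit : pw (-((J:ℝ)*(d:ℝ))) = pw (2*(d:ℝ)) * (pw ((J:ℝ)+2)) ^ (-(d:ℝ)) := by
      have e3 : (pw ((J:ℝ)+2)) ^ (-(d:ℝ)) = pw (((J:ℝ)+2) * (-(d:ℝ))) := by
        rw [pw, pw, ← Real.rpow_mul (by norm_num : (0:ℝ) ≤ 2)]
      rw [e3, ← pw_add]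
      congr 1
      ring
    calc pw (-((J:ℝ)*(d:ℝ))) = pw (2*(d:ℝ)) * (pw ((J:ℝ)+2)) ^ (-(d:ℝ)) := hsplit
      _ ≤ pw (2*(d:ℝ)) * (1+R) ^ (-(d:ℝ)) := mul_le_mul_of_nonneg_left hflip (pw_pos _).le
      _ = 4^d * (1+R) ^ (-(d:ℝ)) := by rw [pw_two_d]
  -- put everything together
  have h2s : (0:ℝ) ≤ 2^s := Real.rpow_nonneg (by norm_num) s
  have hKey : ∑ j ∈ T, f j ≤ (3^s * lg R ^ s) * (4^d * (1+R)^(-(d:ℝ))) * Ks := by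
    have c1 : ∑ j ∈ T, f j ≤ (((J:ℝ)+1)^s * pw (-((J:ℝ)*(d:ℝ)))) * Ks := by
      calc ∑ j ∈ T, f j ≤ ∑' i : ℕ, f (i + J) := by rw [← step2]; exact step1
        _ ≤ (((J:ℝ)+1)^s * pw (-((J:ℝ)*(d:ℝ)))) * ∑' i : ℕ, f i := step3
        _ ≤ (((J:ℝ)+1)^s * pw (-((J:ℝ)*(d:ℝ)))) * Ks := by
            apply mul_le_mul_of_nonneg_left htsum_le
            exact mul_nonneg (Real.rpow_nonneg (by positivity) s) (pw_pos _).le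
    have c2 : (((J:ℝ)+1)^s * pw (-((J:ℝ)*(d:ℝ)))) ≤ (3^s * lg R ^ s) * (4^d * (1+R)^(-(d:ℝ))) := by
      apply mul_le_mul hJ1 hpwJ (pw_pos _).le
      have h3s : (0:ℝ) ≤ 3^s := Real.rpow_nonneg (by norm_num) s
      have hlgs : (0:ℝ) ≤ lg R ^ s := Real.rpow_nonneg (lg_nonneg hR) s
      positivity
    calc ∑ j ∈ T, f j ≤ (((J:ℝ)+1)^s * pw (-((J:ℝ)*(d:ℝ)))) * Ks := c1
      _ ≤ (3^s * lg R ^ s) * (4^d * (1+R)^(-(d:ℝ))) * Ks :=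
          mul_le_mul_of_nonneg_right c2 hKs0.le
  calc (∑ j ∈ T, ∑ z ∈ S.filter fun z => Nat.log 2 (nu d z) = j, wt s (2*(d:ℝ)) ((nu d z : ℝ)))
      ≤ ∑ j ∈ T, 4^d * 2^s * f j := Finset.sum_le_sum hinner
    _ = 4^d * 2^s * ∑ j ∈ T, f j := by rw [Finset.mul_sum]
    _ ≤ 4^d * 2^s * ((3^s * lg R ^ s) * (4^d * (1+R)^(-(d:ℝ))) * Ks) := by
        apply mul_le_mul_of_nonneg_left hKey (by positivity)
    _ = 4^d * 2^s * (3^s * 4^d * Ks) * wt s d R := by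
        rw [wt_eq]
        ring


/-! ### The lattice norm -/

noncomputable def NA (d : ℕ) (A : Matrix (Fin d) (Fin d) ℝ) (z : Fin d → ℤ) : ℝ :=
  eunorm d (A.mulVec fun j => (z j : ℝ))

lemma eunorm_nonneg (d : ℕ) (x : Fin d → ℝ) : 0 ≤ eunorm d x := norm_nonneg _

lemma eunorm_add_le (d : ℕ) (x y : Fin d → ℝ) :
    eunorm d (x + y) ≤ eunorm d x + eunorm d y := by
  rw [eunorm, eunorm, eunorm]
  have h : (WithLp.equiv 2 (Fin d → ℝ)).symm (x + y)
      = (WithLp.equiv 2 (Fin d → ℝ)).symm x + (WithLp.equiv 2 (Fin d → ℝ)).symm y := rfl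
  rw [h]
  exact norm_add_le _ _

lemma eunorm_neg (d : ℕ) (x : Fin d → ℝ) : eunorm d (-x) = eunorm d x := by
  rw [eunorm, eunorm]
  have h : (WithLp.equiv 2 (Fin d → ℝ)).symm (-x) = -((WithLp.equiv 2 (Fin d → ℝ)).symm x) := rfl
  rw [h, norm_neg]

lemma castv_add (d : ℕ) (z w : Fin d → ℤ) :
    (fun j => (((z + w) j : ℤ) : ℝ)) = (fun j => ((z j : ℤ) : ℝ)) + (fun j => ((w j : ℤ) : ℝ)) := by
  funext j
  simp [Pi.add_apply]

lemma castv_neg (d : ℕ) (z : Fin d → ℤ) :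
    (fun j => (((-z) j : ℤ) : ℝ)) = -(fun j => ((z j : ℤ) : ℝ)) := by
  funext j
  simp [Pi.neg_apply]

lemma NA_nonneg (d : ℕ) (A : Matrix (Fin d) (Fin d) ℝ) (z : Fin d → ℤ) : 0 ≤ NA d A z :=
  eunorm_nonneg _ _

lemma NA_add_le (d : ℕ) (A : Matrix (Fin d) (Fin d) ℝ) (z w : Fin d → ℤ) :
    NA d A (z + w) ≤ NA d A z + NA d A w := by
  rw [NA, NA, NA, castv_add, Matrix.mulVec_add]
  exact eunorm_add_le _ _ _

lemma NA_neg (d : ℕ) (A : Matrix (Fin d) (Fin d) ℝ) (z : Fin d → ℤ) :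
    NA d A (-z) = NA d A z := by
  rw [NA, NA, castv_neg, Matrix.mulVec_neg]
  exact eunorm_neg _ _

lemma NA_sub_comm (d : ℕ) (A : Matrix (Fin d) (Fin d) ℝ) (z w : Fin d → ℤ) :
    NA d A (z - w) = NA d A (w - z) := by
  rw [← NA_neg d A (z - w), neg_sub]

lemma NA_tri (d : ℕ) (A : Matrix (Fin d) (Fin d) ℝ) (z w : Fin d → ℤ) :
    NA d A z ≤ NA d A w + NA d A (z - w) := by
  have h := NA_add_le d A w (z - w)
  rwa [add_sub_cancel] at h

lemma eunorm_sub_cast (d : ℕ) (A : Matrix (Fin d) (Fin d) ℝ) (z w : Fin d → ℤ) :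
    eunorm d ((A.mulVec fun j => (z j : ℝ)) - A.mulVec fun j => (w j : ℝ)) = NA d A (z - w) := by
  have h : (fun j => ((z j : ℤ) : ℝ)) - (fun j => ((w j : ℤ) : ℝ))
      = fun j => (((z - w) j : ℤ) : ℝ) := by
    funext j
    simp [Pi.sub_apply]
  rw [NA, ← Matrix.mulVec_sub, h]

lemma coord_sq (d : ℕ) (x : Fin d → ℝ) (j : Fin d) :
    ‖(WithLp.equiv 2 (Fin d → ℝ)).symm x j‖^2 = (x j)^2 := by
  rw [Real.norm_eq_abs, sq_abs]
  rfl

lemma abs_coord_le_eunorm (d : ℕ) (x : Fin d → ℝ) (i : Fin d) : |x i| ≤ eunorm d x := by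
  rw [eunorm, EuclideanSpace.norm_eq]
  have h1 : |x i| = Real.sqrt ((x i)^2) := (Real.sqrt_sq_eq_abs _).symm
  rw [h1]
  apply Real.sqrt_le_sqrt
  calc (x i)^2 ≤ ∑ j, (x j)^2 :=
        Finset.single_le_sum (fun j _ => sq_nonneg (x j)) (Finset.mem_univ i)
    _ = ∑ j, ‖(WithLp.equiv 2 (Fin d → ℝ)).symm x j‖^2 :=
        Finset.sum_congr rfl fun j _ => (coord_sq d x j).symm

lemma eunorm_le_sum (d : ℕ) (x : Fin d → ℝ) : eunorm d x ≤ ∑ i, |x i| := by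
  rw [eunorm, EuclideanSpace.norm_eq]
  have hsum : ∑ j, ‖(WithLp.equiv 2 (Fin d → ℝ)).symm x j‖^2 = ∑ j, (x j)^2 :=
    Finset.sum_congr rfl fun j _ => coord_sq d x j
  rw [hsum]
  have hle : ∑ j, (x j)^2 ≤ (∑ j, |x j|)^2 := by
    have hstep : ∀ j ∈ Finset.univ, (x j)^2 ≤ |x j| * ∑ k, |x k| := by
      intro j _
      have h1 : |x j| ≤ ∑ k, |x k| :=
        Finset.single_le_sum (fun k _ => abs_nonneg (x k)) (Finset.mem_univ j)
      calc (x j)^2 = |x j| * |x j| := by rw [← sq_abs]; ring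
        _ ≤ |x j| * ∑ k, |x k| := mul_le_mul_of_nonneg_left h1 (abs_nonneg _)
    calc ∑ j, (x j)^2 ≤ ∑ j, |x j| * ∑ k, |x k| := Finset.sum_le_sum hstep
      _ = (∑ j, |x j|)^2 := by rw [← Finset.sum_mul]; ring
  calc Real.sqrt (∑ j, (x j)^2) ≤ Real.sqrt ((∑ j, |x j|)^2) := Real.sqrt_le_sqrt hle
    _ = ∑ j, |x j| := Real.sqrt_sq (Finset.sum_nonneg fun j _ => abs_nonneg _)

lemma mulVec_coord (d : ℕ) (A : Matrix (Fin d) (Fin d) ℝ) (v : Fin d → ℝ) (i : Fin d) :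
    (A.mulVec v) i = ∑ j, A i j * v j := rfl

lemma nu_le_NA (d : ℕ) (hd : 1 ≤ d) (A : Matrix (Fin d) (Fin d) ℝ) (hA : IsUnit A.det) :
    ∃ c0 : ℝ, 1 ≤ c0 ∧ ∀ z : Fin d → ℤ, (nu d z : ℝ) ≤ c0 * NA d A z := by
  set B := A⁻¹ with hB
  refine ⟨1 + ∑ i, ∑ k, |B i k|, by
    have h : (0:ℝ) ≤ ∑ i, ∑ k, |B i k| := by positivity
    linarith, fun z => ?_⟩
  set c0 : ℝ := 1 + ∑ i, ∑ k, |B i k| with hc0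
  have hc0nn : (0:ℝ) ≤ c0 := by positivity
  set v : Fin d → ℝ := fun j => (z j : ℝ) with hv
  have hinv : B.mulVec (A.mulVec v) = v := by
    rw [Matrix.mulVec_mulVec, Matrix.nonsing_inv_mul A hA, Matrix.one_mulVec]
  have hcoord : ∀ j : Fin d, |v j| ≤ c0 * NA d A z := by
    intro j
    have h1 : v j = ∑ k, B j k * (A.mulVec v) k := by
      rw [← congrFun hinv j]
      exact mulVec_coord d B (A.mulVec v) j
    have h2 : |v j| ≤ ∑ k, |B j k| * |(A.mulVec v) k| := by
      rw [h1]
      calc |∑ k, B j k * (A.mulVec v) k| ≤ ∑ k, |B j k * (A.mulVec v) k| :=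
            Finset.abs_sum_le_sum_abs _ _
        _ = ∑ k, |B j k| * |(A.mulVec v) k| := Finset.sum_congr rfl fun k _ => abs_mul _ _
    have h3 : ∀ k : Fin d, |(A.mulVec v) k| ≤ NA d A z := fun k => abs_coord_le_eunorm d _ k
    have h4 : ∑ k, |B j k| * |(A.mulVec v) k| ≤ (∑ k, |B j k|) * NA d A z := by
      rw [Finset.sum_mul]
      apply Finset.sum_le_sum
      intro k _
      exact mul_le_mul_of_nonneg_left (h3 k) (abs_nonneg _)
    have h5 : (∑ k, |B j k|) ≤ c0 := by
      rw [hc0]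
      have : (∑ k, |B j k|) ≤ ∑ i, ∑ k, |B i k| :=
        Finset.single_le_sum (f := fun i => ∑ k, |B i k|)
          (fun i _ => Finset.sum_nonneg fun k _ => abs_nonneg _) (Finset.mem_univ j)
      linarith
    have h6 : (∑ k, |B j k|) * NA d A z ≤ c0 * NA d A z :=
      mul_le_mul_of_nonneg_right h5 (NA_nonneg d A z)
    linarith
  have hne : (Finset.univ : Finset (Fin d)).Nonempty := ⟨⟨0, hd⟩, Finset.mem_univ _⟩
  obtain ⟨j, _, hj⟩ := Finset.exists_mem_eq_sup Finset.univ hne fun j => (z j).natAbs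
  have : (nu d z : ℝ) = |v j| := by
    rw [nu, hj, hv]
    rw [Nat.cast_natAbs, Int.cast_abs]
  rw [this]
  exact hcoord j

lemma NA_le_nu (d : ℕ) (A : Matrix (Fin d) (Fin d) ℝ) :
    ∃ c2 : ℝ, 1 ≤ c2 ∧ ∀ z : Fin d → ℤ, NA d A z ≤ c2 * (nu d z : ℝ) := by
  refine ⟨1 + ∑ i, ∑ j, |A i j|, by
    have h : (0:ℝ) ≤ ∑ i, ∑ j, |A i j| := by positivity
    linarith, fun z => ?_⟩
  set c2 : ℝ := 1 + ∑ i, ∑ j, |A i j| with hc2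
  set v : Fin d → ℝ := fun j => (z j : ℝ) with hv
  have hvle : ∀ j : Fin d, |v j| ≤ (nu d z : ℝ) := by
    intro j
    have h1 : |v j| = ((z j).natAbs : ℝ) := by
      rw [hv]
      rw [Nat.cast_natAbs, Int.cast_abs]
    rw [h1]
    exact_mod_cast natAbs_le_nu d z j
  have h2 : ∀ i : Fin d, |(A.mulVec v) i| ≤ (∑ j, |A i j|) * (nu d z : ℝ) := by
    intro i
    rw [mulVec_coord]
    calc |∑ j, A i j * v j| ≤ ∑ j, |A i j * v j| := Finset.abs_sum_le_sum_abs _ _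
      _ = ∑ j, |A i j| * |v j| := Finset.sum_congr rfl fun j _ => abs_mul _ _
      _ ≤ ∑ j, |A i j| * (nu d z : ℝ) := Finset.sum_le_sum fun j _ =>
          mul_le_mul_of_nonneg_left (hvle j) (abs_nonneg _)
      _ = (∑ j, |A i j|) * (nu d z : ℝ) := by rw [Finset.sum_mul]
  calc NA d A z ≤ ∑ i, |(A.mulVec v) i| := eunorm_le_sum d _
    _ ≤ ∑ i, (∑ j, |A i j|) * (nu d z : ℝ) := Finset.sum_le_sum fun i _ => h2 i
    _ = (∑ i, ∑ j, |A i j|) * (nu d z : ℝ) := by rw [Finset.sum_mul]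
    _ ≤ c2 * (nu d z : ℝ) := by
        apply mul_le_mul_of_nonneg_right _ (Nat.cast_nonneg _)
        rw [hc2]
        linarith

/-! ### ENNReal layer -/

lemma tsum_ofReal_le {ι : Type} (f : ι → ℝ) (B : ℝ)
    (hf : ∀ z, 0 ≤ f z) (h : ∀ S : Finset ι, ∑ z ∈ S, f z ≤ B) :
    ∑' z, ENNReal.ofReal (f z) ≤ ENNReal.ofReal B := by
  rw [ENNReal.tsum_eq_iSup_sum]
  apply iSup_le
  intro S
  rw [← ENNReal.ofReal_sum_of_nonneg (fun z _ => hf z)]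
  exact ENNReal.ofReal_le_ofReal (h S)

lemma tsum_shift {d : ℕ} (f : (Fin d → ℤ) → ENNReal) (p : Fin d → ℤ) :
    ∑' z, f (z - p) = ∑' z, f z :=
  (Equiv.subRight p).tsum_eq f

lemma wt_half {q : ℝ} (hq : 1 ≤ q) {s : ℝ} (hs : 0 ≤ s) :
    ∃ C : ℝ, 0 < C ∧ ∀ R r : ℝ, 0 ≤ R → R/2 ≤ r → wt s q r ≤ C * wt s q R := by
  obtain ⟨C, hC, hanti⟩ := wt_anti hq hs
  have h2q : (0:ℝ) < 2^q := Real.rpow_pos_of_pos two_pos q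
  refine ⟨C * 2^q, by positivity, fun R r hR hr => ?_⟩
  have h1 : wt s q r ≤ C * wt s q (R/2) := hanti (R/2) r (by positivity) hr
  have h2 : wt s q (R/2) ≤ 2^q * wt s q R := wt_scale one_le_two hR (by linarith) hs
  calc wt s q r ≤ C * wt s q (R/2) := h1
    _ ≤ C * (2^q * wt s q R) := mul_le_mul_of_nonneg_left h2 hC.le
    _ = (C * 2^q) * wt s q R := by ring

lemma wt_prod_far (d : ℕ) (hd : 1 ≤ d) {s t : ℝ} (hs : 0 ≤ s) (ht : 0 ≤ t) :
    ∃ C : ℝ, 0 < C ∧ ∀ P a b : ℝ, 0 ≤ P → P/2 ≤ a → P/2 ≤ b → a ≤ b + P → b ≤ a + P →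
      wt s d a * wt t d b ≤ C * wt (s+t) (2*(d:ℝ)) a := by
  have hd1 : (1:ℝ) ≤ (d:ℝ) := by exact_mod_cast hd
  obtain ⟨C, hC, hanti⟩ := wt_anti (q := 2*(d:ℝ)) (by linarith) (add_nonneg hs ht)
  have h3d : (0:ℝ) < 3^(d:ℝ) := Real.rpow_pos_of_pos (by norm_num) _
  refine ⟨3^(d:ℝ) * C, by positivity, fun P a b hP ha hb hab hba => ?_⟩
  have ha0 : 0 ≤ a := le_trans (by positivity) ha
  have hb0 : 0 ≤ b := le_trans (by positivity) hb
  set M := max a b with hM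
  have hM0 : 0 ≤ M := le_trans ha0 (le_max_left _ _)
  have haM : a ≤ M := le_max_left _ _
  have hbM : b ≤ M := le_max_right _ _
  have hprod : (1+M)^2 / 3 ≤ (1+a)*(1+b) := by
    rcases le_total a b with h | h
    · rw [max_eq_right h] at hM
      rw [hM]
      nlinarith
    · rw [max_eq_left h] at hM
      rw [hM]
      nlinarith
  -- power part
  have hpow : (1+a)^(-(d:ℝ)) * (1+b)^(-(d:ℝ)) ≤ 3^(d:ℝ) * (1+M)^(-(2*(d:ℝ))) := by
    have e1 : (1+a)^(-(d:ℝ)) * (1+b)^(-(d:ℝ)) = ((1+a)*(1+b))^(-(d:ℝ)) :=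
      (Real.mul_rpow (by linarith) (by linarith)).symm
    have hXpos : (0:ℝ) < (1+M)^2/3 := by positivity
    have hflip : ((1+a)*(1+b))^(-(d:ℝ)) ≤ ((1+M)^2/3)^(-(d:ℝ)) := by
      rw [Real.rpow_neg (by nlinarith), Real.rpow_neg hXpos.le]
      apply inv_anti₀ (Real.rpow_pos_of_pos hXpos _)
      exact Real.rpow_le_rpow hXpos.le hprod (by linarith)
    have e2 : ((1+M)^2/3)^(-(d:ℝ)) = 3^(d:ℝ) * ((1+M)^2)^(-(d:ℝ)) := by
      rw [Real.div_rpow (by positivity) (by norm_num : (0:ℝ) ≤ 3), Real.rpow_neg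
        (by norm_num : (0:ℝ) ≤ 3), div_eq_mul_inv, inv_inv]
      ring
    have e3 : ((1+M)^2)^(-(d:ℝ)) = (1+M)^(-(2*(d:ℝ))) := by
      rw [← Real.rpow_natCast (1+M) 2, ← Real.rpow_mul (by linarith)]
      congr 1
      push_cast
      ring
    rw [e1]
    calc ((1+a)*(1+b))^(-(d:ℝ)) ≤ ((1+M)^2/3)^(-(d:ℝ)) := hflip
      _ = 3^(d:ℝ) * (1+M)^(-(2*(d:ℝ))) := by rw [e2, e3]
  have hlg : lg a ^ s * lg b ^ t ≤ lg M ^ (s+t) := by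
    have h1 : lg a ^ s ≤ lg M ^ s :=
      Real.rpow_le_rpow (lg_nonneg ha0) (lg_mono ha0 haM) hs
    have h2 : lg b ^ t ≤ lg M ^ t :=
      Real.rpow_le_rpow (lg_nonneg hb0) (lg_mono hb0 hbM) ht
    have e4 : lg M ^ (s+t) = lg M ^ s * lg M ^ t := Real.rpow_add (lg_pos hM0) s t
    rw [e4]
    apply mul_le_mul h1 h2 (Real.rpow_nonneg (lg_nonneg hb0) t)
      (Real.rpow_nonneg (lg_nonneg hM0) s)
  have hcomb : wt s d a * wt t d b ≤ 3^(d:ℝ) * wt (s+t) (2*(d:ℝ)) M := by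
    rw [wt_eq, wt_eq, wt_eq]
    calc (1+a)^(-(d:ℝ)) * lg a ^ s * ((1+b)^(-(d:ℝ)) * lg b ^ t)
        = ((1+a)^(-(d:ℝ)) * (1+b)^(-(d:ℝ))) * (lg a ^ s * lg b ^ t) := by ring
      _ ≤ (3^(d:ℝ) * (1+M)^(-(2*(d:ℝ)))) * lg M ^ (s+t) := by
          apply mul_le_mul hpow hlg
          · exact mul_nonneg (Real.rpow_nonneg (lg_nonneg ha0) s)
              (Real.rpow_nonneg (lg_nonneg hb0) t)
          · positivity
      _ = 3^(d:ℝ) * ((1+M)^(-(2*(d:ℝ))) * lg M ^ (s+t)) := by ring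
  have hlast : wt (s+t) (2*(d:ℝ)) M ≤ C * wt (s+t) (2*(d:ℝ)) a := hanti a M ha0 haM
  calc wt s d a * wt t d b ≤ 3^(d:ℝ) * wt (s+t) (2*(d:ℝ)) M := hcomb
    _ ≤ 3^(d:ℝ) * (C * wt (s+t) (2*(d:ℝ)) a) := mul_le_mul_of_nonneg_left hlast h3d.le
    _ = (3^(d:ℝ) * C) * wt (s+t) (2*(d:ℝ)) a := by ring

lemma lattice_sum_a (d : ℕ) (hd : 1 ≤ d) (A : Matrix (Fin d) (Fin d) ℝ) (hA : IsUnit A.det)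
    {s : ℝ} (hs : 0 ≤ s) :
    ∃ C : ℝ, 0 < C ∧ ∀ M : ℝ, 0 ≤ M →
      (∑' z : Fin d → ℤ, ENNReal.ofReal (if NA d A z ≤ M then wt s d (NA d A z) else 0))
        ≤ ENNReal.ofReal (C * lg M ^ (s+1)) := by
  classical
  have hd1 : (1:ℝ) ≤ (d:ℝ) := by exact_mod_cast hd
  obtain ⟨c0, hc0, hc0le⟩ := nu_le_NA d hd A hA
  obtain ⟨Ca, hCa, hcore⟩ := core_a d hd hs
  obtain ⟨Cd, hCd, hanti⟩ := wt_anti (q := (d:ℝ)) hd1 hs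
  have hc0d : (0:ℝ) < c0^(d:ℝ) := Real.rpow_pos_of_pos (by linarith) _
  have hlogc0 : (0:ℝ) ≤ Real.log c0 := Real.log_nonneg hc0
  have hfac : (0:ℝ) < (1 + Real.log c0)^(s+1) := Real.rpow_pos_of_pos (by linarith) _
  refine ⟨Cd * c0^(d:ℝ) * Ca * (1 + Real.log c0)^(s+1), by positivity, fun M hM => ?_⟩
  apply tsum_ofReal_le
  · intro z
    split
    · exact wt_nonneg (NA_nonneg d A z)
    · exact le_refl 0
  · intro S
    rw [← Finset.sum_filter]
    set T := S.filter (fun z => NA d A z ≤ M) with hT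
    have hpt : ∀ z ∈ T, wt s d (NA d A z) ≤ (Cd * c0^(d:ℝ)) * wt s d ((nu d z : ℝ)) := by
      intro z _
      have hc0pos : (0:ℝ) < c0 := by linarith
      have h1 : (nu d z : ℝ)/c0 ≤ NA d A z := by
        rw [div_le_iff₀ hc0pos]
        calc (nu d z : ℝ) ≤ c0 * NA d A z := hc0le z
          _ = NA d A z * c0 := mul_comm _ _
      have h2 : wt s d (NA d A z) ≤ Cd * wt s d ((nu d z : ℝ)/c0) :=
        hanti ((nu d z : ℝ)/c0) (NA d A z) (by positivity) h1
      have h3 : wt s d ((nu d z : ℝ)/c0) ≤ c0^(d:ℝ) * wt s d ((nu d z : ℝ)) :=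
        wt_scale hc0 (Nat.cast_nonneg _) (by linarith) hs
      calc wt s d (NA d A z) ≤ Cd * wt s d ((nu d z : ℝ)/c0) := h2
        _ ≤ Cd * (c0^(d:ℝ) * wt s d ((nu d z : ℝ))) := mul_le_mul_of_nonneg_left h3 hCd.le
        _ = (Cd * c0^(d:ℝ)) * wt s d ((nu d z : ℝ)) := by ring
    have hmem : ∀ z ∈ T, (nu d z : ℝ) ≤ c0 * M := by
      intro z hz
      rw [hT, Finset.mem_filter] at hz
      calc (nu d z : ℝ) ≤ c0 * NA d A z := hc0le z
        _ ≤ c0 * M := mul_le_mul_of_nonneg_left hz.2 (by linarith)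
    have hlgf : lg (c0 * M) ^ (s+1) ≤ (1 + Real.log c0)^(s+1) * lg M ^ (s+1) := by
      have h1 : lg (c0*M) ≤ (1 + Real.log c0) * lg M := lg_scale hc0 hM
      have h2 : lg (c0*M) ^ (s+1) ≤ ((1 + Real.log c0) * lg M)^(s+1) :=
        Real.rpow_le_rpow (lg_nonneg (by positivity)) h1 (by linarith)
      rwa [Real.mul_rpow (by linarith) (lg_nonneg hM)] at h2
    calc (∑ z ∈ T, wt s d (NA d A z))
        ≤ ∑ z ∈ T, (Cd * c0^(d:ℝ)) * wt s d ((nu d z : ℝ)) := Finset.sum_le_sum hpt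
      _ = (Cd * c0^(d:ℝ)) * ∑ z ∈ T, wt s d ((nu d z : ℝ)) := by rw [Finset.mul_sum]
      _ ≤ (Cd * c0^(d:ℝ)) * (Ca * lg (c0*M) ^ (s+1)) := by
          apply mul_le_mul_of_nonneg_left (hcore (c0*M) (by positivity) T hmem) (by positivity)
      _ ≤ (Cd * c0^(d:ℝ)) * (Ca * ((1 + Real.log c0)^(s+1) * lg M ^ (s+1))) := by
          apply mul_le_mul_of_nonneg_left _ (by positivity)
          exact mul_le_mul_of_nonneg_left hlgf hCa.le
      _ = Cd * c0^(d:ℝ) * Ca * (1 + Real.log c0)^(s+1) * lg M ^ (s+1) := by ring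

lemma lattice_sum_b (d : ℕ) (hd : 1 ≤ d) (A : Matrix (Fin d) (Fin d) ℝ) (hA : IsUnit A.det)
    {s : ℝ} (hs : 0 ≤ s) :
    ∃ C : ℝ, 0 < C ∧ ∀ R : ℝ, 0 ≤ R →
      (∑' z : Fin d → ℤ, ENNReal.ofReal
          (if R ≤ NA d A z then wt s (2*(d:ℝ)) (NA d A z) else 0))
        ≤ ENNReal.ofReal (C * wt s d R) := by
  classical
  have hd1 : (1:ℝ) ≤ (d:ℝ) := by exact_mod_cast hd
  obtain ⟨c0, hc0, hc0le⟩ := nu_le_NA d hd A hA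
  obtain ⟨c2, hc2, hc2le⟩ := NA_le_nu d A
  obtain ⟨Cb, hCb, hcore⟩ := core_b d hd hs
  obtain ⟨Cd, hCd, hanti⟩ := wt_anti (q := 2*(d:ℝ)) (by linarith) hs
  have hc0pos : (0:ℝ) < c0 := by linarith
  have hc2pos : (0:ℝ) < c2 := by linarith
  have hc0d : (0:ℝ) < c0^(2*(d:ℝ)) := Real.rpow_pos_of_pos hc0pos _
  have hc2d : (0:ℝ) < c2^(d:ℝ) := Real.rpow_pos_of_pos hc2pos _
  refine ⟨Cd * c0^(2*(d:ℝ)) * Cb * c2^(d:ℝ), by positivity, fun R hR => ?_⟩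
  apply tsum_ofReal_le
  · intro z
    split
    · exact wt_nonneg (NA_nonneg d A z)
    · exact le_refl 0
  · intro S
    rw [← Finset.sum_filter]
    set T := S.filter (fun z => R ≤ NA d A z) with hT
    have hpt : ∀ z ∈ T, wt s (2*(d:ℝ)) (NA d A z)
        ≤ (Cd * c0^(2*(d:ℝ))) * wt s (2*(d:ℝ)) ((nu d z : ℝ)) := by
      intro z _
      have h1 : (nu d z : ℝ)/c0 ≤ NA d A z := by
        rw [div_le_iff₀ hc0pos]
        calc (nu d z : ℝ) ≤ c0 * NA d A z := hc0le z
          _ = NA d A z * c0 := mul_comm _ _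
      have h2 : wt s (2*(d:ℝ)) (NA d A z) ≤ Cd * wt s (2*(d:ℝ)) ((nu d z : ℝ)/c0) :=
        hanti ((nu d z : ℝ)/c0) (NA d A z) (by positivity) h1
      have h3 : wt s (2*(d:ℝ)) ((nu d z : ℝ)/c0) ≤ c0^(2*(d:ℝ)) * wt s (2*(d:ℝ)) ((nu d z : ℝ)) :=
        wt_scale hc0 (Nat.cast_nonneg _) (by linarith) hs
      calc wt s (2*(d:ℝ)) (NA d A z) ≤ Cd * wt s (2*(d:ℝ)) ((nu d z : ℝ)/c0) := h2
        _ ≤ Cd * (c0^(2*(d:ℝ)) * wt s (2*(d:ℝ)) ((nu d z : ℝ))) :=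
            mul_le_mul_of_nonneg_left h3 hCd.le
        _ = (Cd * c0^(2*(d:ℝ))) * wt s (2*(d:ℝ)) ((nu d z : ℝ)) := by ring
    have hmem : ∀ z ∈ T, R/c2 ≤ (nu d z : ℝ) := by
      intro z hz
      rw [hT, Finset.mem_filter] at hz
      rw [div_le_iff₀ hc2pos]
      calc R ≤ NA d A z := hz.2
        _ ≤ c2 * (nu d z : ℝ) := hc2le z
        _ = (nu d z : ℝ) * c2 := mul_comm _ _
    have hwtf : wt s d (R/c2) ≤ c2^(d:ℝ) * wt s d R := wt_scale hc2 hR (by linarith) hs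
    calc (∑ z ∈ T, wt s (2*(d:ℝ)) (NA d A z))
        ≤ ∑ z ∈ T, (Cd * c0^(2*(d:ℝ))) * wt s (2*(d:ℝ)) ((nu d z : ℝ)) := Finset.sum_le_sum hpt
      _ = (Cd * c0^(2*(d:ℝ))) * ∑ z ∈ T, wt s (2*(d:ℝ)) ((nu d z : ℝ)) := by rw [Finset.mul_sum]
      _ ≤ (Cd * c0^(2*(d:ℝ))) * (Cb * wt s d (R/c2)) := by
          apply mul_le_mul_of_nonneg_left (hcore (R/c2) (by positivity) T hmem) (by positivity)
      _ ≤ (Cd * c0^(2*(d:ℝ))) * (Cb * (c2^(d:ℝ) * wt s d R)) := by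
          apply mul_le_mul_of_nonneg_left _ (by positivity)
          exact mul_le_mul_of_nonneg_left hwtf hCb.le
      _ = Cd * c0^(2*(d:ℝ)) * Cb * c2^(d:ℝ) * wt s d R := by ring

lemma conv2 (d : ℕ) (hd : 1 ≤ d) (A : Matrix (Fin d) (Fin d) ℝ) (hA : IsUnit A.det)
    {s t : ℝ} (hs : 0 ≤ s) (ht : 0 ≤ t) :
    ∃ C : ℝ, 0 < C ∧ ∀ p : Fin d → ℤ,
      (∑' z : Fin d → ℤ, ENNReal.ofReal (wt s d (NA d A z) * wt t d (NA d A (z - p))))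
        ≤ ENNReal.ofReal (C * wt (s+t+1) d (NA d A p)) := by
  classical
  have hd1 : (1:ℝ) ≤ (d:ℝ) := by exact_mod_cast hd
  obtain ⟨Cqs, hCqs, hhalf_s⟩ := wt_half (q := (d:ℝ)) hd1 hs
  obtain ⟨Cqt, hCqt, hhalf_t⟩ := wt_half (q := (d:ℝ)) hd1 ht
  obtain ⟨Csc, hCsc, hsc⟩ := wt_prod_far d hd hs ht
  obtain ⟨CAs, hCAs, hlata_s⟩ := lattice_sum_a d hd A hA hs
  obtain ⟨CAt, hCAt, hlata_t⟩ := lattice_sum_a d hd A hA ht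
  obtain ⟨CB, hCB, hlatb⟩ := lattice_sum_b d hd A hA (add_nonneg hs ht)
  have h2d : (0:ℝ) < 2^(d:ℝ) := Real.rpow_pos_of_pos two_pos _
  refine ⟨Cqt*CAs + Cqs*CAt + Csc*CB*2^(d:ℝ), by positivity, fun p => ?_⟩
  set P := NA d A p with hPdef
  have hP0 : 0 ≤ P := NA_nonneg d A p
  set T1 : (Fin d → ℤ) → ENNReal := fun z =>
    ENNReal.ofReal ((Cqt * wt t d P) * (if NA d A z ≤ P/2 then wt s d (NA d A z) else 0)) with hT1
  set T2 : (Fin d → ℤ) → ENNReal := fun z =>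
    ENNReal.ofReal ((Cqs * wt s d P) *
      (if NA d A (z-p) ≤ P/2 then wt t d (NA d A (z-p)) else 0)) with hT2
  set T3 : (Fin d → ℤ) → ENNReal := fun z =>
    ENNReal.ofReal (Csc * (if P/2 ≤ NA d A z then wt (s+t) (2*(d:ℝ)) (NA d A z) else 0)) with hT3
  have hpt : ∀ z : Fin d → ℤ,
      ENNReal.ofReal (wt s d (NA d A z) * wt t d (NA d A (z - p))) ≤ T1 z + T2 z + T3 z := by
    intro z
    set a := NA d A z with hadef
    set b := NA d A (z - p) with hbdef
    have ha0 : 0 ≤ a := NA_nonneg d A z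
    have hb0 : 0 ≤ b := NA_nonneg d A _
    have htr1 : P ≤ a + b := by
      have h := NA_tri d A p z
      rw [NA_sub_comm d A p z] at h
      linarith
    have htr2 : a ≤ b + P := by
      have h := NA_tri d A z (z - p)
      rw [show z - (z - p) = p by abel] at h
      linarith
    have htr3 : b ≤ a + P := by
      have h := NA_tri d A (z - p) z
      rw [show (z - p) - z = -p by abel, NA_neg] at h
      linarith
    by_cases h1 : a ≤ P/2
    · have hbP : P/2 ≤ b := by linarith
      have hb : wt t d b ≤ Cqt * wt t d P := hhalf_t P b hP0 hbP
      have hkey : wt s d a * wt t d b ≤ (Cqt * wt t d P) * (if a ≤ P/2 then wt s d a else 0) := by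
        rw [if_pos h1]
        calc wt s d a * wt t d b ≤ wt s d a * (Cqt * wt t d P) :=
              mul_le_mul_of_nonneg_left hb (wt_nonneg ha0)
          _ = (Cqt * wt t d P) * wt s d a := by ring
      calc ENNReal.ofReal (wt s d a * wt t d b) ≤ T1 z := by
            rw [hT1]
            exact ENNReal.ofReal_le_ofReal hkey
        _ ≤ T1 z + T2 z + T3 z := le_trans le_self_add le_self_add
    · push_neg at h1
      by_cases h2 : b ≤ P/2
      · have ha : wt s d a ≤ Cqs * wt s d P := hhalf_s P a hP0 (by linarith)
        have hkey : wt s d a * wt t d b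
            ≤ (Cqs * wt s d P) * (if b ≤ P/2 then wt t d b else 0) := by
          rw [if_pos h2]
          calc wt s d a * wt t d b ≤ (Cqs * wt s d P) * wt t d b :=
                mul_le_mul_of_nonneg_right ha (wt_nonneg hb0)
            _ = (Cqs * wt s d P) * wt t d b := by ring
        calc ENNReal.ofReal (wt s d a * wt t d b) ≤ T2 z := by
              rw [hT2]
              exact ENNReal.ofReal_le_ofReal hkey
          _ ≤ T1 z + T2 z + T3 z := le_trans le_add_self le_self_add
      · push_neg at h2
        have hkey : wt s d a * wt t d b
            ≤ Csc * (if P/2 ≤ a then wt (s+t) (2*(d:ℝ)) a else 0) := by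
          rw [if_pos h1.le]
          exact hsc P a b hP0 h1.le h2.le htr2 htr3
        calc ENNReal.ofReal (wt s d a * wt t d b) ≤ T3 z := by
              rw [hT3]
              exact ENNReal.ofReal_le_ofReal hkey
          _ ≤ T1 z + T2 z + T3 z := le_add_self
  -- bounds on the three sums
  have hK1 : (0:ℝ) ≤ Cqt * wt t d P := mul_nonneg hCqt.le (wt_nonneg hP0)
  have hK2 : (0:ℝ) ≤ Cqs * wt s d P := mul_nonneg hCqs.le (wt_nonneg hP0)
  have hb1 : ∑' z, T1 z ≤ ENNReal.ofReal ((Cqt*CAs) * wt (s+t+1) d P) := by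
    have e1 : ∑' z, T1 z = ENNReal.ofReal (Cqt * wt t d P) *
        ∑' z, ENNReal.ofReal (if NA d A z ≤ P/2 then wt s d (NA d A z) else 0) := by
      rw [← ENNReal.tsum_mul_left]
      apply tsum_congr
      intro z
      show ENNReal.ofReal ((Cqt * wt t d P) *
        (if NA d A z ≤ P/2 then wt s d (NA d A z) else 0)) = _
      rw [ENNReal.ofReal_mul hK1]
    rw [e1]
    have h2 := hlata_s (P/2) (by positivity)
    calc ENNReal.ofReal (Cqt * wt t d P) *
          ∑' z, ENNReal.ofReal (if NA d A z ≤ P/2 then wt s d (NA d A z) else 0)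
        ≤ ENNReal.ofReal (Cqt * wt t d P) * ENNReal.ofReal (CAs * lg (P/2) ^ (s+1)) :=
          mul_le_mul_right h2 _
      _ = ENNReal.ofReal ((Cqt * wt t d P) * (CAs * lg (P/2) ^ (s+1))) :=
          (ENNReal.ofReal_mul hK1).symm
      _ ≤ ENNReal.ofReal ((Cqt*CAs) * wt (s+t+1) d P) := by
          apply ENNReal.ofReal_le_ofReal
          have hlg : lg (P/2) ^ (s+1) ≤ lg P ^ (s+1) :=
            Real.rpow_le_rpow (lg_nonneg (by positivity))
              (lg_mono (by positivity) (by linarith)) (by linarith)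
          have hwt : wt t d P * lg P ^ (s+1) = wt (s+t+1) d P := by
            rw [wt_lg_mul hP0]
            congr 1
            ring
          calc (Cqt * wt t d P) * (CAs * lg (P/2) ^ (s+1))
              ≤ (Cqt * wt t d P) * (CAs * lg P ^ (s+1)) := by
                apply mul_le_mul_of_nonneg_left _ hK1
                exact mul_le_mul_of_nonneg_left hlg hCAs.le
            _ = (Cqt * CAs) * (wt t d P * lg P ^ (s+1)) := by ring
            _ = (Cqt*CAs) * wt (s+t+1) d P := by rw [hwt]
  have hb2 : ∑' z, T2 z ≤ ENNReal.ofReal ((Cqs*CAt) * wt (s+t+1) d P) := by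
    have eshift : ∑' z, T2 z = ENNReal.ofReal (Cqs * wt s d P) *
        ∑' z, ENNReal.ofReal (if NA d A z ≤ P/2 then wt t d (NA d A z) else 0) := by
      have h0 : ∑' z, T2 z = ∑' z, (fun u : Fin d → ℤ => ENNReal.ofReal ((Cqs * wt s d P) *
          (if NA d A u ≤ P/2 then wt t d (NA d A u) else 0))) (z - p) := rfl
      rw [h0, tsum_shift (fun u : Fin d → ℤ => ENNReal.ofReal ((Cqs * wt s d P) *
          (if NA d A u ≤ P/2 then wt t d (NA d A u) else 0))) p, ← ENNReal.tsum_mul_left]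
      apply tsum_congr
      intro z
      rw [ENNReal.ofReal_mul hK2]
    rw [eshift]
    have h2 := hlata_t (P/2) (by positivity)
    calc ENNReal.ofReal (Cqs * wt s d P) *
          ∑' z, ENNReal.ofReal (if NA d A z ≤ P/2 then wt t d (NA d A z) else 0)
        ≤ ENNReal.ofReal (Cqs * wt s d P) * ENNReal.ofReal (CAt * lg (P/2) ^ (t+1)) :=
          mul_le_mul_right h2 _
      _ = ENNReal.ofReal ((Cqs * wt s d P) * (CAt * lg (P/2) ^ (t+1))) :=
          (ENNReal.ofReal_mul hK2).symm
      _ ≤ ENNReal.ofReal ((Cqs*CAt) * wt (s+t+1) d P) := by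
          apply ENNReal.ofReal_le_ofReal
          have hlg : lg (P/2) ^ (t+1) ≤ lg P ^ (t+1) :=
            Real.rpow_le_rpow (lg_nonneg (by positivity))
              (lg_mono (by positivity) (by linarith)) (by linarith)
          have hwt : wt s d P * lg P ^ (t+1) = wt (s+t+1) d P := by
            rw [wt_lg_mul hP0]
            congr 1
            ring
          calc (Cqs * wt s d P) * (CAt * lg (P/2) ^ (t+1))
              ≤ (Cqs * wt s d P) * (CAt * lg P ^ (t+1)) := by
                apply mul_le_mul_of_nonneg_left _ hK2
                exact mul_le_mul_of_nonneg_left hlg hCAt.le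
            _ = (Cqs * CAt) * (wt s d P * lg P ^ (t+1)) := by ring
            _ = (Cqs*CAt) * wt (s+t+1) d P := by rw [hwt]
  have hb3 : ∑' z, T3 z ≤ ENNReal.ofReal ((Csc*CB*2^(d:ℝ)) * wt (s+t+1) d P) := by
    have e1 : ∑' z, T3 z = ENNReal.ofReal Csc *
        ∑' z, ENNReal.ofReal (if P/2 ≤ NA d A z then wt (s+t) (2*(d:ℝ)) (NA d A z) else 0) := by
      rw [← ENNReal.tsum_mul_left]
      apply tsum_congr
      intro z
      show ENNReal.ofReal (Csc *
        (if P/2 ≤ NA d A z then wt (s+t) (2*(d:ℝ)) (NA d A z) else 0)) = _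
      rw [ENNReal.ofReal_mul hCsc.le]
    rw [e1]
    have h2 := hlatb (P/2) (by positivity)
    calc ENNReal.ofReal Csc *
          ∑' z, ENNReal.ofReal (if P/2 ≤ NA d A z then wt (s+t) (2*(d:ℝ)) (NA d A z) else 0)
        ≤ ENNReal.ofReal Csc * ENNReal.ofReal (CB * wt (s+t) d (P/2)) := mul_le_mul_right h2 _
      _ = ENNReal.ofReal (Csc * (CB * wt (s+t) d (P/2))) := (ENNReal.ofReal_mul hCsc.le).symm
      _ ≤ ENNReal.ofReal ((Csc*CB*2^(d:ℝ)) * wt (s+t+1) d P) := by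
          apply ENNReal.ofReal_le_ofReal
          have hsc1 : wt (s+t) d (P/2) ≤ 2^(d:ℝ) * wt (s+t) d P :=
            wt_scale one_le_two hP0 (by linarith) (add_nonneg hs ht)
          have hsc2 : wt (s+t) d P ≤ wt (s+t+1) d P := wt_mono_s hP0 (by linarith)
          calc Csc * (CB * wt (s+t) d (P/2)) ≤ Csc * (CB * (2^(d:ℝ) * wt (s+t) d P)) := by
                apply mul_le_mul_of_nonneg_left _ hCsc.le
                exact mul_le_mul_of_nonneg_left hsc1 hCB.le
            _ = (Csc*CB*2^(d:ℝ)) * wt (s+t) d P := by ring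
            _ ≤ (Csc*CB*2^(d:ℝ)) * wt (s+t+1) d P := by
                apply mul_le_mul_of_nonneg_left hsc2 (by positivity)
  have hwtP : 0 ≤ wt (s+t+1) d P := wt_nonneg hP0
  calc (∑' z : Fin d → ℤ, ENNReal.ofReal (wt s d (NA d A z) * wt t d (NA d A (z - p))))
      ≤ ∑' z, (T1 z + T2 z + T3 z) := ENNReal.tsum_le_tsum hpt
    _ = (∑' z, T1 z) + (∑' z, T2 z) + (∑' z, T3 z) := by
        rw [ENNReal.tsum_add, ENNReal.tsum_add]
    _ ≤ ENNReal.ofReal ((Cqt*CAs) * wt (s+t+1) d P)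
        + ENNReal.ofReal ((Cqs*CAt) * wt (s+t+1) d P)
        + ENNReal.ofReal ((Csc*CB*2^(d:ℝ)) * wt (s+t+1) d P) :=
        add_le_add (add_le_add hb1 hb2) hb3
    _ = ENNReal.ofReal ((Cqt*CAs) * wt (s+t+1) d P + (Cqs*CAt) * wt (s+t+1) d P
        + (Csc*CB*2^(d:ℝ)) * wt (s+t+1) d P) := by
        rw [← ENNReal.ofReal_add (by positivity) (by positivity),
          ← ENNReal.ofReal_add (by positivity) (by positivity)]
    _ = ENNReal.ofReal ((Cqt*CAs + Cqs*CAt + Csc*CB*2^(d:ℝ)) * wt (s+t+1) d P) := by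
        congr 1
        ring

end TCB

set_option maxHeartbeats 2000000 in
open TCB in
/-- Triple discrete convolution bound (the `M = 0` case of estimate (A.6)):
for `|n| ≥ |m|`,
`Σ_{ℓ ∈ Λ} |ℓ|_{l^α}^{−d} |ℓ−m|_{l^β}^{−d} |ℓ−n|_{l^γ}^{−d}
  ≤ C [ |n|_{l^α}^{−d} |m−n|_{l^{β+γ+1}}^{−d} + |n|_{l^γ}^{−d} |m|_{l^{α+β+1}}^{−d} ]`. -/
theorem lattice_triple_convolution_bound
    (d : ℕ) (A : Matrix (Fin d) (Fin d) ℝ) (hA : IsUnit A.det)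
    (α β γ : ℝ) (hα : 0 ≤ α) (hβ : 0 ≤ β) (hγ : 0 ≤ γ) :
    ∃ C : ℝ, 0 < C ∧ ∀ zm zn : Fin d → ℤ,
      eunorm d (A.mulVec fun j => (zm j : ℝ)) ≤ eunorm d (A.mulVec fun j => (zn j : ℝ)) →
      (∑' z : Fin d → ℤ, ENNReal.ofReal
          (wt α d (eunorm d (A.mulVec fun j => (z j : ℝ))) *
            wt β d (eunorm d ((A.mulVec fun j => (z j : ℝ)) - A.mulVec fun j => (zm j : ℝ))) *
            wt γ d (eunorm d ((A.mulVec fun j => (z j : ℝ)) - A.mulVec fun j => (zn j : ℝ)))))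
        ≤ ENNReal.ofReal (C *
            (wt α d (eunorm d (A.mulVec fun j => (zn j : ℝ))) *
                wt (β + γ + 1) d
                  (eunorm d ((A.mulVec fun j => (zm j : ℝ)) - A.mulVec fun j => (zn j : ℝ))) +
              wt γ d (eunorm d (A.mulVec fun j => (zn j : ℝ))) *
                wt (α + β + 1) d (eunorm d (A.mulVec fun j => (zm j : ℝ))))) := by
  classical
  rcases Nat.eq_zero_or_pos d with hd0 | hd
  · -- trivial zero-dimensional case
    subst hd0
    refine ⟨1, one_pos, fun zm zn _ => ?_⟩
    have he : ∀ x : Fin 0 → ℝ, eunorm 0 x = 0 := by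
      intro x
      rw [eunorm, EuclideanSpace.norm_eq]
      simp
    have hwz : ∀ (s : ℝ) (x : Fin 0 → ℝ), wt s ((0:ℕ):ℝ) (eunorm 0 x) = 1 := by
      intro s x
      rw [he x, wt, add_zero, add_zero, Real.log_exp, Nat.cast_zero, neg_zero,
        Real.rpow_zero, Real.one_rpow, mul_one]
    rw [tsum_eq_single (0 : Fin 0 → ℤ) (fun b hb => absurd (Subsingleton.elim b 0) hb)]
    rw [hwz α, hwz β, hwz γ, hwz α, hwz (β + γ + 1), hwz γ, hwz (α + β + 1)]
    apply ENNReal.ofReal_le_ofReal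
    norm_num
  · -- main case
    have hd1 : (1:ℝ) ≤ (d:ℝ) := by exact_mod_cast hd
    obtain ⟨Cqa, hCqa, hhalf_a⟩ := wt_half (q := (d:ℝ)) hd1 hα
    obtain ⟨Cqb, hCqb, hhalf_b⟩ := wt_half (q := (d:ℝ)) hd1 hβ
    obtain ⟨Cqg, hCqg, hhalf_g⟩ := wt_half (q := (d:ℝ)) hd1 hγ
    obtain ⟨C1, hC1, hconv_bg⟩ := conv2 d hd A hA hβ hγ
    obtain ⟨C2, hC2, hconv_ag⟩ := conv2 d hd A hA hα hγ
    obtain ⟨C3, hC3, hconv_ab⟩ := conv2 d hd A hA hα hβ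
    have h3g : (0:ℝ) < 3^(γ+1) := Real.rpow_pos_of_pos (by norm_num) _
    have h3a : (0:ℝ) < 3^(α+1) := Real.rpow_pos_of_pos (by norm_num) _
    set c1 : ℝ := Cqa * C1 with hc1
    set c2 : ℝ := Cqb * C2 * (3^(γ+1) + 3^(α+1)) with hc2
    set c3 : ℝ := Cqg * C3 with hc3
    have hc1p : 0 < c1 := by positivity
    have hc2p : 0 < c2 := by positivity
    have hc3p : 0 < c3 := by positivity
    refine ⟨c1 + c2 + c3, by positivity, fun zm zn hmn => ?_⟩
    set Nn := NA d A zn with hNn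
    set Nm := NA d A zm with hNm
    set Nmn := NA d A (zm - zn) with hNmn
    have hNn0 : 0 ≤ Nn := NA_nonneg d A zn
    have hNm0 : 0 ≤ Nm := NA_nonneg d A zm
    have hNmn0 : 0 ≤ Nmn := NA_nonneg d A _
    -- rewrite goal in terms of NA
    have hL : (∑' z : Fin d → ℤ, ENNReal.ofReal
          (wt α d (eunorm d (A.mulVec fun j => ((z j : ℤ):ℝ))) *
            wt β d (eunorm d ((A.mulVec fun j => ((z j : ℤ):ℝ)) - A.mulVec fun j => ((zm j : ℤ):ℝ))) *
            wt γ d (eunorm d ((A.mulVec fun j => ((z j : ℤ):ℝ)) - A.mulVec fun j => ((zn j : ℤ):ℝ)))))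
        = ∑' z : Fin d → ℤ, ENNReal.ofReal
          (wt α d (NA d A z) * wt β d (NA d A (z - zm)) * wt γ d (NA d A (z - zn))) := by
      apply tsum_congr
      intro z
      rw [eunorm_sub_cast d A z zm, eunorm_sub_cast d A z zn]
      rfl
    rw [hL, eunorm_sub_cast d A zm zn]
    show _ ≤ ENNReal.ofReal ((c1 + c2 + c3) *
      (wt α d Nn * wt (β + γ + 1) d Nmn + wt γ d Nn * wt (α + β + 1) d Nm))
    -- triangle inequalities
    have tri_n : Nn ≤ Nm + Nmn := by
      have h := NA_tri d A zn zm
      rw [NA_sub_comm d A zn zm] at h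
      exact h
    -- sum bounds for the three convolutions
    have SU2 : (∑' z : Fin d → ℤ, ENNReal.ofReal (wt α d (NA d A z) * wt γ d (NA d A (z - zn))))
        ≤ ENNReal.ofReal (C2 * wt (α+γ+1) d Nn) := hconv_ag zn
    have SU3 : (∑' z : Fin d → ℤ, ENNReal.ofReal (wt α d (NA d A z) * wt β d (NA d A (z - zm))))
        ≤ ENNReal.ofReal (C3 * wt (α+β+1) d Nm) := hconv_ab zm
    have SU1 : (∑' z : Fin d → ℤ, ENNReal.ofReal (wt β d (NA d A (z - zm)) * wt γ d (NA d A (z - zn))))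
        ≤ ENNReal.ofReal (C1 * wt (β+γ+1) d Nmn) := by
      have hshift : (∑' z : Fin d → ℤ,
            ENNReal.ofReal (wt β d (NA d A (z - zm)) * wt γ d (NA d A (z - zn))))
          = ∑' z : Fin d → ℤ,
            ENNReal.ofReal (wt β d (NA d A z) * wt γ d (NA d A (z - (zn - zm)))) := by
        calc (∑' z : Fin d → ℤ,
              ENNReal.ofReal (wt β d (NA d A (z - zm)) * wt γ d (NA d A (z - zn))))
            = ∑' z : Fin d → ℤ, (fun u : Fin d → ℤ =>
                ENNReal.ofReal (wt β d (NA d A u) * wt γ d (NA d A (u - (zn - zm))))) (z - zm) := by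
              apply tsum_congr
              intro z
              show ENNReal.ofReal (wt β d (NA d A (z - zm)) * wt γ d (NA d A (z - zn)))
                = ENNReal.ofReal (wt β d (NA d A (z - zm)) * wt γ d (NA d A (z - zm - (zn - zm))))
              rw [show z - zm - (zn - zm) = z - zn from by abel]
          _ = _ := tsum_shift (fun u : Fin d → ℤ =>
                ENNReal.ofReal (wt β d (NA d A u) * wt γ d (NA d A (u - (zn - zm))))) zm
      rw [hshift]
      have h := hconv_bg (zn - zm)
      have hNAeq : NA d A (zn - zm) = Nmn := NA_sub_comm d A zn zm
      rwa [hNAeq] at h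
    -- branch on which of |m|, |m-n| is large
    have main : ∀ Q : ℝ, 0 ≤ Q →
        (∀ z : Fin d → ℤ, NA d A z ≤ NA d A (z - zm) → NA d A (z - zn) ≤ NA d A (z - zm) →
          Q/2 ≤ NA d A (z - zm)) →
        ((Cqb * wt β d Q) * (C2 * wt (α+γ+1) d Nn)
          ≤ c2 * (wt α d Nn * wt (β+γ+1) d Nmn + wt γ d Nn * wt (α+β+1) d Nm)) →
        (∑' z : Fin d → ℤ, ENNReal.ofReal
            (wt α d (NA d A z) * wt β d (NA d A (z - zm)) * wt γ d (NA d A (z - zn))))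
          ≤ ENNReal.ofReal ((c1 + c2 + c3) *
            (wt α d Nn * wt (β + γ + 1) d Nmn + wt γ d Nn * wt (α + β + 1) d Nm)) := by
      intro Q hQ0 hQhalf hterm2
      set X1 : ℝ := wt α d Nn * wt (β+γ+1) d Nmn with hX1
      set X3 : ℝ := wt γ d Nn * wt (α+β+1) d Nm with hX3
      have hX10 : 0 ≤ X1 := mul_nonneg (wt_nonneg hNn0) (wt_nonneg hNmn0)
      have hX30 : 0 ≤ X3 := mul_nonneg (wt_nonneg hNn0) (wt_nonneg hNm0)
      set U1 : (Fin d → ℤ) → ENNReal := fun z => ENNReal.ofReal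
        ((Cqa * wt α d Nn) * (wt β d (NA d A (z - zm)) * wt γ d (NA d A (z - zn)))) with hU1
      set U2 : (Fin d → ℤ) → ENNReal := fun z => ENNReal.ofReal
        ((Cqb * wt β d Q) * (wt α d (NA d A z) * wt γ d (NA d A (z - zn)))) with hU2
      set U3 : (Fin d → ℤ) → ENNReal := fun z => ENNReal.ofReal
        ((Cqg * wt γ d Nn) * (wt α d (NA d A z) * wt β d (NA d A (z - zm)))) with hU3
      have hpt : ∀ z : Fin d → ℤ, ENNReal.ofReal
          (wt α d (NA d A z) * wt β d (NA d A (z - zm)) * wt γ d (NA d A (z - zn)))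
          ≤ U1 z + U2 z + U3 z := by
        intro z
        set a := NA d A z with ha
        set b := NA d A (z - zm) with hb
        set c := NA d A (z - zn) with hc
        have ha0 : 0 ≤ a := NA_nonneg d A z
        have hb0 : 0 ≤ b := NA_nonneg d A _
        have hc0 : 0 ≤ c := NA_nonneg d A _
        have htri_ac : Nn ≤ a + c := by
          have h := NA_tri d A zn z
          rw [NA_sub_comm d A zn z] at h
          exact h
        by_cases hab : b ≤ a
        · by_cases hac : c ≤ a
          · -- a is the max
            have hA2 : Nn/2 ≤ a := by linarith
            have hwa : wt α d a ≤ Cqa * wt α d Nn := hhalf_a Nn a hNn0 hA2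
            have hkey : wt α d a * wt β d b * wt γ d c
                ≤ (Cqa * wt α d Nn) * (wt β d b * wt γ d c) := by
              have h1 : 0 ≤ wt β d b * wt γ d c :=
                mul_nonneg (wt_nonneg hb0) (wt_nonneg hc0)
              calc wt α d a * wt β d b * wt γ d c = wt α d a * (wt β d b * wt γ d c) := by ring
                _ ≤ (Cqa * wt α d Nn) * (wt β d b * wt γ d c) :=
                    mul_le_mul_of_nonneg_right hwa h1
            calc ENNReal.ofReal (wt α d a * wt β d b * wt γ d c) ≤ U1 z :=
                  ENNReal.ofReal_le_ofReal hkey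
              _ ≤ U1 z + U2 z + U3 z := le_trans le_self_add le_self_add
          · -- c is the max
            push_neg at hac
            have hC2 : Nn/2 ≤ c := by linarith
            have hwc : wt γ d c ≤ Cqg * wt γ d Nn := hhalf_g Nn c hNn0 hC2
            have hkey : wt α d a * wt β d b * wt γ d c
                ≤ (Cqg * wt γ d Nn) * (wt α d a * wt β d b) := by
              have h1 : 0 ≤ wt α d a * wt β d b :=
                mul_nonneg (wt_nonneg ha0) (wt_nonneg hb0)
              calc wt α d a * wt β d b * wt γ d c = (wt α d a * wt β d b) * wt γ d c := by ring
                _ ≤ (wt α d a * wt β d b) * (Cqg * wt γ d Nn) :=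
                    mul_le_mul_of_nonneg_left hwc h1
                _ = (Cqg * wt γ d Nn) * (wt α d a * wt β d b) := by ring
            calc ENNReal.ofReal (wt α d a * wt β d b * wt γ d c) ≤ U3 z :=
                  ENNReal.ofReal_le_ofReal hkey
              _ ≤ U1 z + U2 z + U3 z := le_add_self
        · push_neg at hab
          by_cases hbc : c ≤ b
          · -- b is the max
            have hB2 : Q/2 ≤ b := hQhalf z hab.le hbc
            have hwb : wt β d b ≤ Cqb * wt β d Q := hhalf_b Q b hQ0 hB2
            have hkey : wt α d a * wt β d b * wt γ d c
                ≤ (Cqb * wt β d Q) * (wt α d a * wt γ d c) := by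
              have h1 : 0 ≤ wt α d a * wt γ d c :=
                mul_nonneg (wt_nonneg ha0) (wt_nonneg hc0)
              calc wt α d a * wt β d b * wt γ d c = (wt α d a * wt γ d c) * wt β d b := by ring
                _ ≤ (wt α d a * wt γ d c) * (Cqb * wt β d Q) :=
                    mul_le_mul_of_nonneg_left hwb h1
                _ = (Cqb * wt β d Q) * (wt α d a * wt γ d c) := by ring
            calc ENNReal.ofReal (wt α d a * wt β d b * wt γ d c) ≤ U2 z :=
                  ENNReal.ofReal_le_ofReal hkey
              _ ≤ U1 z + U2 z + U3 z := le_trans le_add_self le_self_add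
          · -- c is the max
            push_neg at hbc
            have hC2 : Nn/2 ≤ c := by linarith
            have hwc : wt γ d c ≤ Cqg * wt γ d Nn := hhalf_g Nn c hNn0 hC2
            have hkey : wt α d a * wt β d b * wt γ d c
                ≤ (Cqg * wt γ d Nn) * (wt α d a * wt β d b) := by
              have h1 : 0 ≤ wt α d a * wt β d b :=
                mul_nonneg (wt_nonneg ha0) (wt_nonneg hb0)
              calc wt α d a * wt β d b * wt γ d c = (wt α d a * wt β d b) * wt γ d c := by ring
                _ ≤ (wt α d a * wt β d b) * (Cqg * wt γ d Nn) :=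
                    mul_le_mul_of_nonneg_left hwc h1
                _ = (Cqg * wt γ d Nn) * (wt α d a * wt β d b) := by ring
            calc ENNReal.ofReal (wt α d a * wt β d b * wt γ d c) ≤ U3 z :=
                  ENNReal.ofReal_le_ofReal hkey
              _ ≤ U1 z + U2 z + U3 z := le_add_self
      have hK1 : (0:ℝ) ≤ Cqa * wt α d Nn := mul_nonneg hCqa.le (wt_nonneg hNn0)
      have hK2 : (0:ℝ) ≤ Cqb * wt β d Q := mul_nonneg hCqb.le (wt_nonneg hQ0)
      have hK3 : (0:ℝ) ≤ Cqg * wt γ d Nn := mul_nonneg hCqg.le (wt_nonneg hNn0)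
      have hbU1 : ∑' z, U1 z ≤ ENNReal.ofReal ((Cqa * wt α d Nn) * (C1 * wt (β+γ+1) d Nmn)) := by
        have e1 : ∑' z, U1 z = ENNReal.ofReal (Cqa * wt α d Nn) *
            ∑' z : Fin d → ℤ, ENNReal.ofReal (wt β d (NA d A (z - zm)) * wt γ d (NA d A (z - zn))) := by
          rw [← ENNReal.tsum_mul_left]
          apply tsum_congr
          intro z
          show ENNReal.ofReal ((Cqa * wt α d Nn) *
            (wt β d (NA d A (z - zm)) * wt γ d (NA d A (z - zn)))) = _
          rw [ENNReal.ofReal_mul hK1]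
        rw [e1]
        calc ENNReal.ofReal (Cqa * wt α d Nn) *
              ∑' z : Fin d → ℤ, ENNReal.ofReal (wt β d (NA d A (z - zm)) * wt γ d (NA d A (z - zn)))
            ≤ ENNReal.ofReal (Cqa * wt α d Nn) * ENNReal.ofReal (C1 * wt (β+γ+1) d Nmn) :=
              mul_le_mul_right SU1 _
          _ = ENNReal.ofReal ((Cqa * wt α d Nn) * (C1 * wt (β+γ+1) d Nmn)) :=
              (ENNReal.ofReal_mul hK1).symm
      have hbU2 : ∑' z, U2 z ≤ ENNReal.ofReal ((Cqb * wt β d Q) * (C2 * wt (α+γ+1) d Nn)) := by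
        have e1 : ∑' z, U2 z = ENNReal.ofReal (Cqb * wt β d Q) *
            ∑' z : Fin d → ℤ, ENNReal.ofReal (wt α d (NA d A z) * wt γ d (NA d A (z - zn))) := by
          rw [← ENNReal.tsum_mul_left]
          apply tsum_congr
          intro z
          show ENNReal.ofReal ((Cqb * wt β d Q) *
            (wt α d (NA d A z) * wt γ d (NA d A (z - zn)))) = _
          rw [ENNReal.ofReal_mul hK2]
        rw [e1]
        calc ENNReal.ofReal (Cqb * wt β d Q) *
              ∑' z : Fin d → ℤ, ENNReal.ofReal (wt α d (NA d A z) * wt γ d (NA d A (z - zn)))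
            ≤ ENNReal.ofReal (Cqb * wt β d Q) * ENNReal.ofReal (C2 * wt (α+γ+1) d Nn) :=
              mul_le_mul_right SU2 _
          _ = ENNReal.ofReal ((Cqb * wt β d Q) * (C2 * wt (α+γ+1) d Nn)) :=
              (ENNReal.ofReal_mul hK2).symm
      have hbU3 : ∑' z, U3 z ≤ ENNReal.ofReal ((Cqg * wt γ d Nn) * (C3 * wt (α+β+1) d Nm)) := by
        have e1 : ∑' z, U3 z = ENNReal.ofReal (Cqg * wt γ d Nn) *
            ∑' z : Fin d → ℤ, ENNReal.ofReal (wt α d (NA d A z) * wt β d (NA d A (z - zm))) := by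
          rw [← ENNReal.tsum_mul_left]
          apply tsum_congr
          intro z
          show ENNReal.ofReal ((Cqg * wt γ d Nn) *
            (wt α d (NA d A z) * wt β d (NA d A (z - zm)))) = _
          rw [ENNReal.ofReal_mul hK3]
        rw [e1]
        calc ENNReal.ofReal (Cqg * wt γ d Nn) *
              ∑' z : Fin d → ℤ, ENNReal.ofReal (wt α d (NA d A z) * wt β d (NA d A (z - zm)))
            ≤ ENNReal.ofReal (Cqg * wt γ d Nn) * ENNReal.ofReal (C3 * wt (α+β+1) d Nm) :=
              mul_le_mul_right SU3 _
          _ = ENNReal.ofReal ((Cqg * wt γ d Nn) * (C3 * wt (α+β+1) d Nm)) :=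
              (ENNReal.ofReal_mul hK3).symm
      have hx1 : (Cqa * wt α d Nn) * (C1 * wt (β+γ+1) d Nmn) = c1 * X1 := by
        rw [hc1, hX1]; ring
      have hx3 : (Cqg * wt γ d Nn) * (C3 * wt (α+β+1) d Nm) = c3 * X3 := by
        rw [hc3, hX3]; ring
      have hfinal : c1 * X1 + (Cqb * wt β d Q) * (C2 * wt (α+γ+1) d Nn) + c3 * X3
          ≤ (c1 + c2 + c3) * (X1 + X3) := by
        have h2 := hterm2
        nlinarith [hX10, hX30, hc1p.le, hc3p.le, mul_nonneg hc1p.le hX30, mul_nonneg hc3p.le hX10]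
      calc (∑' z : Fin d → ℤ, ENNReal.ofReal
            (wt α d (NA d A z) * wt β d (NA d A (z - zm)) * wt γ d (NA d A (z - zn))))
          ≤ ∑' z, (U1 z + U2 z + U3 z) := ENNReal.tsum_le_tsum hpt
        _ = (∑' z, U1 z) + (∑' z, U2 z) + (∑' z, U3 z) := by
            rw [ENNReal.tsum_add, ENNReal.tsum_add]
        _ ≤ ENNReal.ofReal ((Cqa * wt α d Nn) * (C1 * wt (β+γ+1) d Nmn))
            + ENNReal.ofReal ((Cqb * wt β d Q) * (C2 * wt (α+γ+1) d Nn))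
            + ENNReal.ofReal ((Cqg * wt γ d Nn) * (C3 * wt (α+β+1) d Nm)) :=
            add_le_add (add_le_add hbU1 hbU2) hbU3
        _ = ENNReal.ofReal ((Cqa * wt α d Nn) * (C1 * wt (β+γ+1) d Nmn)
            + (Cqb * wt β d Q) * (C2 * wt (α+γ+1) d Nn)
            + (Cqg * wt γ d Nn) * (C3 * wt (α+β+1) d Nm)) := by
            have hnn1 : 0 ≤ (Cqa * wt α d Nn) * (C1 * wt (β+γ+1) d Nmn) :=
              mul_nonneg hK1 (mul_nonneg hC1.le (wt_nonneg hNmn0))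
            have hnn2 : 0 ≤ (Cqb * wt β d Q) * (C2 * wt (α+γ+1) d Nn) :=
              mul_nonneg hK2 (mul_nonneg hC2.le (wt_nonneg hNn0))
            have hnn3 : 0 ≤ (Cqg * wt γ d Nn) * (C3 * wt (α+β+1) d Nm) :=
              mul_nonneg hK3 (mul_nonneg hC3.le (wt_nonneg hNm0))
            rw [← ENNReal.ofReal_add hnn1 hnn2, ← ENNReal.ofReal_add (add_nonneg hnn1 hnn2) hnn3]
        _ ≤ ENNReal.ofReal ((c1 + c2 + c3) * (X1 + X3)) := by
            apply ENNReal.ofReal_le_ofReal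
            rw [hx1, hx3]
            exact hfinal
    -- now the two branches
    have hlgmul : ∀ (u v w : ℝ), 0 ≤ w → wt u d w * lg w ^ v = wt (u+v) d w := by
      intro u v w hw
      exact wt_lg_mul hw
    rcases le_total Nm Nmn with hbr | hbr
    · -- |m - n| is large : Q := Nmn
      apply main Nmn hNmn0
      · intro z h1 h2
        have htri : Nmn ≤ NA d A (z - zm) + NA d A (z - zn) := by
          have h := NA_add_le d A (zm - z) (z - zn)
          rw [show (zm - z) + (z - zn) = zm - zn from by abel, NA_sub_comm d A zm z] at h
          exact h
        linarith
      · -- scalar comparison to X1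
        have hNn4 : Nn ≤ 4 * Nmn := by linarith
        have hlgq : lg Nn ≤ 3 * lg Nmn := lg_quarter hNn0 hNmn0 hNn4
        have h1 : lg Nn ^ (γ+1) ≤ 3^(γ+1) * lg Nmn ^ (γ+1) := by
          calc lg Nn ^ (γ+1) ≤ (3 * lg Nmn) ^ (γ+1) :=
                Real.rpow_le_rpow (lg_nonneg hNn0) hlgq (by linarith)
            _ = 3^(γ+1) * lg Nmn ^ (γ+1) := Real.mul_rpow (by norm_num) (lg_nonneg hNmn0)
        have e1 : wt (α+γ+1) d Nn = wt α d Nn * lg Nn ^ (γ+1) := by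
          rw [hlgmul α (γ+1) Nn hNn0]
          congr 1
          ring
        have e2 : wt β d Nmn * lg Nmn ^ (γ+1) = wt (β+γ+1) d Nmn := by
          rw [hlgmul β (γ+1) Nmn hNmn0]
          congr 1
          ring
        have hcore : wt β d Nmn * wt (α+γ+1) d Nn
            ≤ 3^(γ+1) * (wt α d Nn * wt (β+γ+1) d Nmn) := by
          rw [e1, ← e2]
          calc wt β d Nmn * (wt α d Nn * lg Nn ^ (γ+1))
              ≤ wt β d Nmn * (wt α d Nn * (3^(γ+1) * lg Nmn ^ (γ+1))) := by
                apply mul_le_mul_of_nonneg_left _ (wt_nonneg hNmn0)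
                exact mul_le_mul_of_nonneg_left h1 (wt_nonneg hNn0)
            _ = 3^(γ+1) * (wt α d Nn * (wt β d Nmn * lg Nmn ^ (γ+1))) := by ring
        have hXpos : 0 ≤ wt γ d Nn * wt (α+β+1) d Nm :=
          mul_nonneg (wt_nonneg hNn0) (wt_nonneg hNm0)
        have hX1pos : 0 ≤ wt α d Nn * wt (β+γ+1) d Nmn :=
          mul_nonneg (wt_nonneg hNn0) (wt_nonneg hNmn0)
        calc (Cqb * wt β d Nmn) * (C2 * wt (α+γ+1) d Nn)
            = (Cqb * C2) * (wt β d Nmn * wt (α+γ+1) d Nn) := by ring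
          _ ≤ (Cqb * C2) * (3^(γ+1) * (wt α d Nn * wt (β+γ+1) d Nmn)) := by
              apply mul_le_mul_of_nonneg_left hcore (by positivity)
          _ ≤ c2 * (wt α d Nn * wt (β+γ+1) d Nmn + wt γ d Nn * wt (α+β+1) d Nm) := by
              rw [hc2]
              nlinarith [mul_nonneg (mul_nonneg hCqb.le hC2.le) (mul_nonneg h3a.le hX1pos),
                mul_nonneg (mul_nonneg hCqb.le hC2.le)
                  (mul_nonneg (add_pos h3g h3a).le hXpos)]
    · -- |m| is large : Q := Nm
      apply main Nm hNm0
      · intro z h1 _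
        have htri : Nm ≤ NA d A z + NA d A (z - zm) := by
          have h := NA_tri d A zm z
          rw [NA_sub_comm d A zm z] at h
          exact h
        linarith
      · have hNn4 : Nn ≤ 4 * Nm := by linarith
        have hlgq : lg Nn ≤ 3 * lg Nm := lg_quarter hNn0 hNm0 hNn4
        have h1 : lg Nn ^ (α+1) ≤ 3^(α+1) * lg Nm ^ (α+1) := by
          calc lg Nn ^ (α+1) ≤ (3 * lg Nm) ^ (α+1) :=
                Real.rpow_le_rpow (lg_nonneg hNn0) hlgq (by linarith)
            _ = 3^(α+1) * lg Nm ^ (α+1) := Real.mul_rpow (by norm_num) (lg_nonneg hNm0)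
        have e1 : wt (α+γ+1) d Nn = wt γ d Nn * lg Nn ^ (α+1) := by
          rw [hlgmul γ (α+1) Nn hNn0]
          congr 1
          ring
        have e2 : wt β d Nm * lg Nm ^ (α+1) = wt (α+β+1) d Nm := by
          rw [hlgmul β (α+1) Nm hNm0]
          congr 1
          ring
        have hcore : wt β d Nm * wt (α+γ+1) d Nn
            ≤ 3^(α+1) * (wt γ d Nn * wt (α+β+1) d Nm) := by
          rw [e1, ← e2]
          calc wt β d Nm * (wt γ d Nn * lg Nn ^ (α+1))
              ≤ wt β d Nm * (wt γ d Nn * (3^(α+1) * lg Nm ^ (α+1))) := by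
                apply mul_le_mul_of_nonneg_left _ (wt_nonneg hNm0)
                exact mul_le_mul_of_nonneg_left h1 (wt_nonneg hNn0)
            _ = 3^(α+1) * (wt γ d Nn * (wt β d Nm * lg Nm ^ (α+1))) := by ring
        have hXpos : 0 ≤ wt γ d Nn * wt (α+β+1) d Nm :=
          mul_nonneg (wt_nonneg hNn0) (wt_nonneg hNm0)
        have hX1pos : 0 ≤ wt α d Nn * wt (β+γ+1) d Nmn :=
          mul_nonneg (wt_nonneg hNn0) (wt_nonneg hNmn0)
        calc (Cqb * wt β d Nm) * (C2 * wt (α+γ+1) d Nn)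
            = (Cqb * C2) * (wt β d Nm * wt (α+γ+1) d Nn) := by ring
          _ ≤ (Cqb * C2) * (3^(α+1) * (wt γ d Nn * wt (α+β+1) d Nm)) := by
              apply mul_le_mul_of_nonneg_left hcore (by positivity)
          _ ≤ c2 * (wt α d Nn * wt (β+γ+1) d Nmn + wt γ d Nn * wt (α+β+1) d Nm) := by
              rw [hc2]
              nlinarith [mul_nonneg (mul_nonneg hCqb.le hC2.le) (mul_nonneg h3g.le hXpos),
                mul_nonneg (mul_nonneg hCqb.le hC2.le)
                  (mul_nonneg (add_pos h3g h3a).le hX1pos)]
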